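/- arXiv:2309.03197 — 5 statements merged into one kernel-verified Lean document; each statement's English description precedes it below -/
import Mathlib

section
/- If X is a symmetric integer-valued log-concave random variable on ℤ, then the random variable |X| is log-concave on ℕ; that is, if p denotes the probability mass function of X and q the probability mass function of |X|, then q(k)² ≥ q(k−1)q(k+1) for all k ≥ 1 and the support of q is an integer interval contained in ℕ. -/
open MeasureTheory ProbabilityTheory
open scoped ProbabilityTheory

/-!
Folding a p.m.f. `p` on `ℤ` gives the p.m.f. of `|X|`: `p 0` at `0` and `p k + p (-k)` at `k > 0`.
For symmetric `p` the latter is `2 p k`, so away from `k = 1` the log-concavity inequality of `|X|`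
is that of `X` scaled by `4`; at `k = 1` it reads
`2 p 0 p 2 ≤ 4 p 1 ²`, which follows from `p 0 p 2 ≤ p 1 ²`.
The support of `|X|` is the nonnegative part of that of `X`.
-/

/-- A function `p : ℤ → ℝ` is a log-concave probability mass function if
`p(k)² ≥ p(k-1)·p(k+1)` for all `k ∈ ℤ` and its support is an integer interval. -/
def IsLogConcavePMF (p : ℤ → ℝ) : Prop :=
  (∀ k : ℤ, p (k - 1) * p (k + 1) ≤ p k ^ 2) ∧
  (∀ a b c : ℤ, a ≤ b → b ≤ c → 0 < p a → 0 < p c → 0 < p b)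

def absPMF (p : ℤ → ℝ) (k : ℤ) : ℝ :=
  if k < 0 then 0 else if k = 0 then p 0 else p k + p (-k)

section absPMF

variable {p : ℤ → ℝ} {k : ℤ}

theorem absPMF_of_neg (hk : k < 0) : absPMF p k = 0 := if_pos hk

theorem absPMF_zero : absPMF p 0 = p 0 := by simp [absPMF]

theorem absPMF_of_pos (hsym : ∀ k, p k = p (-k)) (hk : 0 < k) : absPMF p k = 2 * p k := by
  rw [absPMF, if_neg hk.not_gt, if_neg hk.ne', ← hsym]
  ring

theorem nonneg_of_absPMF_pos (h : 0 < absPMF p k) : 0 ≤ k := by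
  by_contra! hk
  exact h.ne' (absPMF_of_neg hk)

theorem absPMF_pos_iff (hsym : ∀ k, p k = p (-k)) (hk : 0 ≤ k) : 0 < absPMF p k ↔ 0 < p k := by
  rcases hk.eq_or_lt with rfl | hk
  · rw [absPMF_zero]
  · rw [absPMF_of_pos hsym hk]
    exact mul_pos_iff_of_pos_left two_pos

theorem IsLogConcavePMF.absPMF_mul_le_sq (hlc : IsLogConcavePMF p) (hsym : ∀ k, p k = p (-k))
    (hk : 1 ≤ k) : absPMF p (k - 1) * absPMF p (k + 1) ≤ absPMF p k ^ 2 := by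
  have hk' := hlc.1 k
  rw [absPMF_of_pos hsym (k := k + 1) (by omega), absPMF_of_pos hsym (k := k) (by omega)]
  rcases hk.eq_or_lt with rfl | hk
  · norm_num [absPMF_zero] at hk' ⊢
    nlinarith [sq_nonneg (p 1)]
  · rw [absPMF_of_pos hsym (k := k - 1) (by omega)]
    nlinarith

theorem IsLogConcavePMF.absPMF_pos_of_le (hlc : IsLogConcavePMF p) (hsym : ∀ k, p k = p (-k))
    {a b c : ℤ} (hab : a ≤ b) (hbc : b ≤ c) (ha : 0 < absPMF p a) (hc : 0 < absPMF p c) :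
    0 < absPMF p b := by
  have ha0 := nonneg_of_absPMF_pos ha
  have hc0 := nonneg_of_absPMF_pos hc
  rw [absPMF_pos_iff hsym ha0] at ha
  rw [absPMF_pos_iff hsym hc0] at hc
  rw [absPMF_pos_iff hsym (ha0.trans hab)]
  exact hlc.2 a b c hab hbc ha hc

end absPMF

theorem measureReal_abs_preimage_singleton {Ω : Type*} [MeasurableSpace Ω] (μ : Measure Ω)
    [IsFiniteMeasure μ] {X : Ω → ℤ} (hX : Measurable X) (k : ℤ) :
    μ.real ((fun ω => |X ω|) ⁻¹' {k}) = absPMF (fun j => μ.real (X ⁻¹' {j})) k := by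
  rcases lt_trichotomy k 0 with hk | rfl | hk
  · rw [absPMF_of_neg hk, Set.preimage_eq_empty, measureReal_empty]
    exact Set.disjoint_singleton_left.2 fun ⟨ω, hω⟩ => (abs_nonneg (X ω)).not_gt (hω.trans_lt hk)
  · rw [absPMF_zero]
    congr 1
    ext ω
    simp
  · have hsplit : (fun ω => |X ω|) ⁻¹' {k} = X ⁻¹' {k} ∪ X ⁻¹' {-k} := by
      ext ω
      simp [abs_eq hk.le]
    have hdisj : Disjoint (X ⁻¹' {k}) (X ⁻¹' {-k}) :=
      (Set.disjoint_singleton.2 (by omega)).preimage X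
    rw [hsplit, measureReal_union hdisj (hX (measurableSet_singleton _)), absPMF,
      if_neg hk.not_gt, if_neg hk.ne']

/-- If `X` is a symmetric log-concave random variable on `ℤ`, then `|X|` is
log-concave on `ℕ`: its p.m.f. `q` satisfies `q(k)² ≥ q(k-1)·q(k+1)` for all `k ≥ 1`,
vanishes on negative integers, and has integer-interval support. -/
theorem abs_of_symmetric_logConcave
    {Ω : Type*} [MeasureSpace Ω] [IsProbabilityMeasure (ℙ : Measure Ω)]
    (X : Ω → ℤ) (hX : Measurable X)
    (p q : ℤ → ℝ)
    (hp : ∀ k : ℤ, p k = (ℙ (X ⁻¹' {k})).toReal)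
    (hq : ∀ k : ℤ, q k = (ℙ ((fun ω => |X ω|) ⁻¹' {k})).toReal)
    (hsym : ∀ k : ℤ, p k = p (-k))
    (hlc : IsLogConcavePMF p) :
    (∀ k : ℤ, 1 ≤ k → q (k - 1) * q (k + 1) ≤ q k ^ 2) ∧
    (∀ k : ℤ, k < 0 → q k = 0) ∧
    (∀ a b c : ℤ, a ≤ b → b ≤ c → 0 < q a → 0 < q c → 0 < q b) := by
  have hpq : q = absPMF p := by
    funext k
    rw [hq, ← measureReal_def, measureReal_abs_preimage_singleton ℙ hX]
    congr
    funext j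
    rw [hp, measureReal_def]
  subst hpq
  exact ⟨fun k => hlc.absPMF_mul_le_sq hsym, fun k => absPMF_of_neg,
    fun a b c => hlc.absPMF_pos_of_le hsym⟩
end

section
/- If X is a symmetric log-concave integer-valued random variable, then for all real β ≥ 1, E[|X|^β]^{1/β} ≤ Γ(β+1)^{1/β} · (E[|X|] + 1), where Γ denotes the Gamma function. -/
open MeasureTheory ProbabilityTheory
open scoped ProbabilityTheory

open Finset Real

structure LogConcaveSeq (a : ℕ → ℝ) : Prop where
  nonneg : ∀ n, 0 ≤ a n
  mul_le_sq : ∀ n, a n * a (n + 2) ≤ a (n + 1) ^ 2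
  pos_between : ∀ i j k, i ≤ j → j ≤ k → 0 < a i → 0 < a k → 0 < a j

namespace LogConcaveSeq

variable {a : ℕ → ℝ}

theorem succ_mul_le_mul_succ (ha : LogConcaveSeq a) {k j : ℕ} (hkj : k ≤ j) :
    a (j + 1) * a k ≤ a j * a (k + 1) := by
  induction j, hkj using Nat.le_induction with
  | base => rw [mul_comm]
  | succ j hkj ih =>
    rcases (ha.nonneg (j + 1)).eq_or_lt with hzero | hpos
    · suffices a (j + 2) * a k = 0 by
        rw [this, ← hzero, zero_mul]
      by_contra hne
      have hprod := lt_of_le_of_ne (mul_nonneg (ha.nonneg _) (ha.nonneg _)) (Ne.symm hne)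
      have := ha.pos_between k (j + 1) (j + 2) (by omega) (by omega)
        (pos_of_mul_pos_right hprod (ha.nonneg _)) (pos_of_mul_pos_left hprod (ha.nonneg _))
      exact this.ne hzero
    · refine le_of_mul_le_mul_right ?_ hpos
      calc a (j + 2) * a k * a (j + 1) = a (j + 2) * (a (j + 1) * a k) := by ring
        _ ≤ a (j + 2) * (a j * a (k + 1)) := mul_le_mul_of_nonneg_left ih (ha.nonneg _)
        _ = a j * a (j + 2) * a (k + 1) := by ring
        _ ≤ a (j + 1) ^ 2 * a (k + 1) := mul_le_mul_of_nonneg_right (ha.mul_le_sq j) (ha.nonneg _)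
        _ = a (j + 1) * a (k + 1) * a (j + 1) := by ring

theorem tail (ha : LogConcaveSeq a) (hs : Summable a) :
    LogConcaveSeq (fun k => ∑' n, a (n + k)) := by
  set T : ℕ → ℝ := fun k => ∑' n, a (n + k)
  have hT : ∀ k, T k = a k + T (k + 1) := fun k => by
    simp only [T, (summable_nat_add_iff k).2 hs |>.tsum_eq_zero_add, zero_add, add_assoc,
      add_comm 1 k]
  have hT_nonneg : ∀ k, 0 ≤ T k := fun k => tsum_nonneg fun n => ha.nonneg _
  have hkey : ∀ k, a k * T (k + 1) ≤ a (k + 1) * T k := fun k => by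
    simp only [T, ← tsum_mul_left]
    refine ((summable_nat_add_iff _).2 hs).mul_left _ |>.tsum_le_tsum (fun n => ?_)
      (((summable_nat_add_iff _).2 hs).mul_left _)
    have := ha.succ_mul_le_mul_succ (Nat.le_add_left k n)
    rw [← add_assoc]
    linarith
  refine ⟨hT_nonneg, fun k => ?_, fun i j k hij hjk _ hk => ?_⟩
  · have h2 : T (k + 2) = T (k + 1) - a (k + 1) := by linarith [hT (k + 1)]
    rw [h2]
    linear_combination hkey k + T (k + 1) * hT k
  · have hanti : Antitone T := antitone_nat_of_succ_le fun k => by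
      linarith [hT k, ha.nonneg k]
    exact hk.trans_le (hanti hjk)

theorem le_pow_after_crossing (ha : LogConcaveSeq a) {q : ℝ} (hq : 0 < q) {m : ℕ}
    (hm : q ^ m ≤ a m) (hm1 : a (m + 1) ≤ q ^ (m + 1)) {n : ℕ} (hn : m + 1 ≤ n) :
    a n ≤ q ^ n := by
  induction n, hn using Nat.le_induction with
  | base => exact hm1
  | succ n hmn ih =>
    refine le_of_mul_le_mul_right ?_ (pow_pos hq m)
    calc a (n + 1) * q ^ m ≤ a (n + 1) * a m := mul_le_mul_of_nonneg_left hm (ha.nonneg _)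
      _ ≤ a n * a (m + 1) := ha.succ_mul_le_mul_succ (by omega)
      _ ≤ q ^ n * q ^ (m + 1) := mul_le_mul ih hm1 (ha.nonneg _) (by positivity)
      _ = q ^ (n + 1) * q ^ m := by ring

theorem le_pow_of_lt_pow (ha : LogConcaveSeq a) (ha0 : 1 ≤ a 0) {q : ℝ} (hq : 0 ≤ q)
    {j k : ℕ} (hjk : j ≤ k) (hj : a j < q ^ j) : a k ≤ q ^ k := by
  classical
  have hex : ∃ i, a i < q ^ i := ⟨j, hj⟩
  obtain ⟨m, hm⟩ : ∃ m, Nat.find hex = m + 1 := Nat.exists_eq_succ_of_ne_zero fun h0 => by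
    have := Nat.find_spec hex
    rw [h0, pow_zero] at this
    linarith
  have hcross := Nat.find_spec hex
  rw [hm] at hcross
  have hqpos : 0 < q := by
    rcases hq.eq_or_lt with rfl | hq
    · rw [zero_pow (Nat.succ_ne_zero m)] at hcross
      exact absurd hcross (not_lt.2 (ha.nonneg _))
    · exact hq
  exact ha.le_pow_after_crossing hqpos (not_lt.1 (Nat.find_min hex (by omega))) hcross.le
    (hm ▸ (Nat.find_min' hex hj).trans hjk)

end LogConcaveSeq

-- If `p` is the symmetric law of `X`, this is the law of `|X|`.
theorem IsLogConcavePMF.logConcaveSeq_fold {p : ℤ → ℝ} (hp : IsLogConcavePMF p)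
    (hp0 : ∀ k, 0 ≤ p k) : LogConcaveSeq fun n : ℕ => (if n = 0 then 1 else 2) * p n := by
  have hc : ∀ n : ℕ, 0 < (if n = 0 then (1 : ℝ) else 2) := fun n => by split_ifs <;> norm_num
  refine ⟨fun n => mul_nonneg (hc n).le (hp0 n), fun n => ?_, fun i j k hij hjk hi hk => ?_⟩
  · rcases n with _ | n
    · have h := hp.1 1
      norm_num at h ⊢
      nlinarith [hp0 0, hp0 2, hp0 1]
    · have h := hp.1 (n + 2)
      rw [show (n : ℤ) + 2 - 1 = n + 1 by ring, show (n : ℤ) + 2 + 1 = n + 3 by ring] at h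
      push_cast
      rw [show (n : ℤ) + 1 + 1 = n + 2 by ring, show (n : ℤ) + 1 + 2 = n + 3 by ring]
      nlinarith
  · refine mul_pos (hc j) (hp.2 i j k (by omega) (by omega) ?_ ?_)
    · exact pos_of_mul_pos_right hi (hc i).le
    · exact pos_of_mul_pos_right hk (hc k).le

theorem tsum_mul_le_tsum_mul_of_single_crossing {w f g : ℕ → ℝ} {s : ℝ} (hw : Monotone w)
    (hf : HasSum f s) (hg : HasSum g s) (hwf : Summable fun n => w n * f n)
    (hwg : Summable fun n => w n * g n) (hcross : ∀ j k, j ≤ k → f j < g j → f k ≤ g k) :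
    ∑' n, w n * f n ≤ ∑' n, w n * g n := by
  classical
  have hd : HasSum (fun n => f n - g n) 0 := by simpa using hf.sub hg
  rw [← sub_nonpos, ← hwf.tsum_sub hwg]
  by_cases hex : ∃ k, f k < g k
  · calc ∑' n, (w n * f n - w n * g n) ≤ ∑' n, w (Nat.find hex) * (f n - g n) := by
          refine (hwf.sub hwg).tsum_le_tsum (fun k => ?_) (hd.summable.mul_left _)
          rw [← mul_sub]
          rcases lt_or_ge k (Nat.find hex) with hk | hk
          · exact mul_le_mul_of_nonneg_right (hw hk.le)
              (sub_nonneg.2 (not_lt.1 (Nat.find_min hex hk)))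
          · exact mul_le_mul_of_nonpos_right (hw hk)
              (sub_nonpos.2 (hcross _ k hk (Nat.find_spec hex)))
      _ = 0 := by rw [tsum_mul_left, hd.tsum_eq, mul_zero]
  · push Not at hex
    have hzero := (hasSum_zero_iff_of_nonneg fun n => sub_nonneg.2 (hex n)).1 hd
    simp [← mul_sub, funext_iff.1 hzero]

theorem monotone_rpow_succ_sub {β : ℝ} (hβ : 1 ≤ β) :
    Monotone fun j : ℕ => ((j : ℝ) + 1) ^ β - (j : ℝ) ^ β := by
  refine monotone_nat_of_le_succ fun j => ?_
  have h := (convexOn_rpow hβ).slope_mono_adjacent (x := j) (y := j + 1) (z := j + 2)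
    (by simp) (by simp; positivity) (by linarith) (by linarith)
  norm_num at h
  push_cast
  rw [show (j : ℝ) + 1 + 1 = j + 2 by ring]
  linarith

theorem sum_range_rpow_mul_exp_sub_exp_le {β c : ℝ} (hβ : 0 < β) (hc : 0 < c) (N : ℕ) :
    ∑ n ∈ range N, (n : ℝ) ^ β * (exp (-(c * n)) - exp (-(c * (n + 1)))) ≤
      Gamma (β + 1) / c ^ β := by
  set f : ℝ → ℝ := fun s => s ^ β * (c * exp (-(c * s)))
  have hgamma : ∫ s in Set.Ioi 0, f s = Gamma (β + 1) / c ^ β := by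
    have key := integral_rpow_mul_exp_neg_mul_Ioi (a := β + 1) (by linarith) hc
    rw [add_sub_cancel_right] at key
    simp only [f, mul_left_comm _ c, integral_const_mul, key]
    rw [div_rpow zero_le_one hc.le, one_rpow, rpow_add_one hc.ne']
    field_simp
  have hf_int : IntegrableOn f (Set.Ioi 0) :=
    .of_integral_ne_zero (by rw [hgamma]; positivity)
  have hf_cont : Continuous f :=
    (continuous_id.rpow_const fun _ => Or.inr hβ.le).mul (by fun_prop)
  have hexp (x y : ℝ) : ∫ s in x..y, c * exp (-(c * s)) = exp (-(c * x)) - exp (-(c * y)) := by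
    rw [intervalIntegral.integral_eq_sub_of_hasDerivAt (f := fun s => -exp (-(c * s)))
      (fun s _ => by simpa [mul_comm] using ((hasDerivAt_id s).const_mul c).fun_neg.exp.fun_neg)
      (Continuous.intervalIntegrable (by fun_prop) _ _)]
    ring
  calc ∑ n ∈ range N, (n : ℝ) ^ β * (exp (-(c * n)) - exp (-(c * (n + 1))))
      ≤ ∑ n ∈ range N, ∫ s in (n : ℝ)..((n + 1 : ℕ) : ℝ), f s := by
        gcongr with n
        rw [Nat.cast_succ, ← hexp, ← intervalIntegral.integral_const_mul]
        refine intervalIntegral.integral_mono_on (by linarith)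
          (Continuous.intervalIntegrable (by fun_prop) _ _)
          (hf_cont.intervalIntegrable _ _) fun s hs => ?_
        exact mul_le_mul_of_nonneg_right (rpow_le_rpow (by positivity) hs.1 hβ.le) (by positivity)
    _ = ∫ s in (0 : ℝ)..N, f s := by
        simpa using intervalIntegral.sum_integral_adjacent_intervals (a := fun n : ℕ => (n : ℝ))
          (n := N) fun k _ => hf_cont.intervalIntegrable _ _
    _ ≤ ∫ s in Set.Ioi 0, f s := by
        rw [intervalIntegral.integral_of_le (by positivity)]
        refine setIntegral_mono_set hf_int ?_ Set.Ioc_subset_Ioi_self.eventuallyLE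
        filter_upwards [ae_restrict_mem measurableSet_Ioi] with s hs
        exact mul_nonneg (rpow_nonneg hs.le _) (by positivity)
    _ = Gamma (β + 1) / c ^ β := hgamma

theorem sum_range_one_sub_mul_rpow_mul_geometric_le {β q : ℝ} (hβ : 0 < β) (hq0 : 0 ≤ q)
    (hq1 : q < 1) (N : ℕ) :
    ∑ n ∈ range N, (1 - q) * ((n : ℝ) ^ β * q ^ n) ≤ Gamma (β + 1) * (1 - q)⁻¹ ^ β := by
  rcases hq0.eq_or_lt with rfl | hq
  · rw [Finset.sum_eq_zero fun n _ => ?_]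
    · positivity
    · rcases n with _ | n <;> simp [zero_rpow hβ.ne']
  have hc : 0 < -log q := neg_pos.2 (log_neg hq hq1)
  have hpow (x : ℝ) : exp (-(-log q * x)) = q ^ x := by
    rw [neg_mul, neg_neg, rpow_def_of_pos hq, mul_comm]
  have hlog : 1 - q ≤ -log q := by linarith [log_le_sub_one_of_pos hq]
  calc ∑ n ∈ range N, (1 - q) * ((n : ℝ) ^ β * q ^ n)
      = ∑ n ∈ range N, (n : ℝ) ^ β * (exp (-(-log q * n)) - exp (-(-log q * (n + 1)))) := by
        refine Finset.sum_congr rfl fun n _ => ?_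
        rw [hpow, hpow, ← Nat.cast_succ, rpow_natCast, rpow_natCast, pow_succ]
        ring
    _ ≤ Gamma (β + 1) / (-log q) ^ β := sum_range_rpow_mul_exp_sub_exp_le hβ hc N
    _ ≤ Gamma (β + 1) * (1 - q)⁻¹ ^ β := by
        rw [div_eq_mul_inv, ← inv_rpow hc.le]
        gcongr

theorem summable_rpow_mul_geometric {β q : ℝ} (hβ : 0 < β) (hq0 : 0 ≤ q) (hq1 : q < 1) :
    Summable fun n : ℕ => (n : ℝ) ^ β * q ^ n :=
  (summable_mul_left_iff (sub_ne_zero.2 hq1.ne')).1 <| summable_of_sum_range_le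
    (fun n => mul_nonneg (by linarith) (by positivity))
    (sum_range_one_sub_mul_rpow_mul_geometric_le hβ hq0 hq1)

theorem one_sub_mul_tsum_rpow_mul_geometric_le {β q : ℝ} (hβ : 0 < β) (hq0 : 0 ≤ q)
    (hq1 : q < 1) :
    (1 - q) * ∑' n : ℕ, (n : ℝ) ^ β * q ^ n ≤ Gamma (β + 1) * (1 - q)⁻¹ ^ β := by
  rw [← tsum_mul_left]
  exact Real.tsum_le_of_sum_range_le (fun n => mul_nonneg (by linarith) (by positivity))
    (sum_range_one_sub_mul_rpow_mul_geometric_le hβ hq0 hq1)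

theorem hasSum_rpow_succ_sub_mul_geometric {β q : ℝ} (hβ : β ≠ 0)
    (hs : Summable fun n : ℕ => (n : ℝ) ^ β * q ^ n) :
    HasSum (fun j : ℕ => (((j : ℝ) + 1) ^ β - (j : ℝ) ^ β) * q ^ (j + 1))
      ((1 - q) * ∑' n : ℕ, (n : ℝ) ^ β * q ^ n) := by
  have hshift := (hasSum_nat_add_iff' 1).2 hs.hasSum
  have hscaled := hs.hasSum.mul_left q
  simp only [range_one, sum_singleton, CharP.cast_eq_zero, zero_rpow hβ, zero_mul, sub_zero,
    Nat.cast_succ] at hshift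
  have h := hshift.sub hscaled
  rw [← one_sub_mul] at h
  exact h.congr_fun fun j => by ring

theorem LogConcaveSeq.le_gamma_mul_add_one_rpow {Q : ℕ → ℝ} (hQ : LogConcaveSeq Q)
    (hQ0 : 1 ≤ Q 0) {β M T : ℝ} (hβ : 1 ≤ β) (hM : HasSum (fun j => Q (j + 1)) M)
    (hT : HasSum (fun j : ℕ => (((j : ℝ) + 1) ^ β - (j : ℝ) ^ β) * Q (j + 1)) T) :
    T ≤ Gamma (β + 1) * (M + 1) ^ β := by
  have hβ0 : 0 < β := by linarith
  have hM0 : 0 ≤ M := hM.nonneg fun j => hQ.nonneg _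
  set q := M / (M + 1)
  have hq0 : 0 ≤ q := by positivity
  have hq1 : q < 1 := (div_lt_one (by linarith)).2 (by linarith)
  have hinv : (1 - q)⁻¹ = M + 1 := by
    simp only [q]
    field_simp
    ring
  have hgeom : HasSum (fun j => q ^ (j + 1)) M := by
    have h := (hasSum_geometric_of_lt_one hq0 hq1).mul_left q
    rw [hinv, show q * (M + 1) = M by simp only [q]; field_simp] at h
    exact h.congr_fun fun j => pow_succ' q j
  have hwgeom :=
    hasSum_rpow_succ_sub_mul_geometric hβ0.ne' (summable_rpow_mul_geometric hβ0 hq0 hq1)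
  calc T = ∑' j : ℕ, (((j : ℝ) + 1) ^ β - (j : ℝ) ^ β) * Q (j + 1) := hT.tsum_eq.symm
    _ ≤ ∑' j : ℕ, (((j : ℝ) + 1) ^ β - (j : ℝ) ^ β) * q ^ (j + 1) :=
        tsum_mul_le_tsum_mul_of_single_crossing (monotone_rpow_succ_sub hβ) hM hgeom hT.summable
          hwgeom.summable fun j k hjk h => hQ.le_pow_of_lt_pow hQ0 hq0 (by omega) h
    _ = (1 - q) * ∑' n : ℕ, (n : ℝ) ^ β * q ^ n := hwgeom.tsum_eq
    _ ≤ Gamma (β + 1) * (1 - q)⁻¹ ^ β := one_sub_mul_tsum_rpow_mul_geometric_le hβ0 hq0 hq1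
    _ = Gamma (β + 1) * (M + 1) ^ β := by rw [hinv]

section

variable {Ω : Type*} [MeasurableSpace Ω] {μ : Measure Ω} {Y : Ω → ℕ} {f : ℕ → ℝ}

theorem lintegral_ofReal_comp_nat_eq_tsum (hY : Measurable Y) (hf : Monotone f) (hf0 : f 0 = 0) :
    ∫⁻ ω, ENNReal.ofReal (f (Y ω)) ∂μ =
      ∑' j, ENNReal.ofReal (f (j + 1) - f j) * μ {ω | j < Y ω} := by
  have hsplit (n : ℕ) : ENNReal.ofReal (f n) =
      ∑' j, if j < n then ENNReal.ofReal (f (j + 1) - f j) else 0 := by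
    rw [tsum_eq_sum (s := range n) fun j hj => if_neg (by simpa using hj),
      Finset.sum_congr rfl fun j hj => if_pos (mem_range.1 hj),
      ← ENNReal.ofReal_sum_of_nonneg fun j _ => sub_nonneg.2 (hf j.le_succ),
      sum_range_sub, hf0, sub_zero]
  simp_rw [hsplit]
  have hmeas (j : ℕ) :
      AEMeasurable (fun ω => if j < Y ω then ENNReal.ofReal (f (j + 1) - f j) else 0) μ :=
    (Measurable.ite (hY measurableSet_Ioi) measurable_const measurable_const).aemeasurable
  rw [lintegral_tsum hmeas]
  refine tsum_congr fun j => ?_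
  rw [← lintegral_indicator_const (s := {ω | j < Y ω}) (hY measurableSet_Ioi)]
  simp only [Set.indicator_apply, Set.mem_ofPred_eq]

theorem hasSum_integral_comp_nat (hY : Measurable Y) (hf : Monotone f) (hf0 : f 0 = 0)
    (hint : Integrable (fun ω => f (Y ω)) μ) :
    HasSum (fun j => (f (j + 1) - f j) * μ.real {ω | j < Y ω}) (∫ ω, f (Y ω) ∂μ) := by
  have hf_nonneg (n : ℕ) : 0 ≤ f n := hf0 ▸ hf n.zero_le
  have hfin := (lintegral_ofReal_ne_top_iff_integrable hint.aestronglyMeasurable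
    (.of_forall fun ω => hf_nonneg _)).2 hint
  rw [integral_eq_lintegral_of_nonneg_ae (.of_forall fun ω => hf_nonneg _)
    hint.aestronglyMeasurable]
  rw [lintegral_ofReal_comp_nat_eq_tsum hY hf hf0] at hfin ⊢
  rw [ENNReal.tsum_toReal_eq (ENNReal.ne_top_of_tsum_ne_top hfin)]
  refine (ENNReal.hasSum_toReal hfin).congr_fun fun j => ?_
  rw [ENNReal.toReal_mul, ENNReal.toReal_ofReal (sub_nonneg.2 (hf j.le_succ)), measureReal_def]

theorem hasSum_measureReal_preimage_add [IsFiniteMeasure μ] (hY : Measurable Y) (k : ℕ) :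
    HasSum (fun n => μ.real (Y ⁻¹' {n + k})) (μ.real {ω | k ≤ Y ω}) := by
  have hunion : {ω | k ≤ Y ω} = ⋃ n, Y ⁻¹' {n + k} := by
    ext ω
    simp only [Set.mem_ofPred_eq, Set.mem_iUnion, Set.mem_preimage, Set.mem_singleton_iff]
    exact ⟨fun h => ⟨Y ω - k, by omega⟩, by rintro ⟨n, hn⟩; omega⟩
  have hdisj : Pairwise (Function.onFun Disjoint fun n => Y ⁻¹' {n + k}) := fun m n hmn =>
    Disjoint.preimage Y (Set.disjoint_singleton.2 (by omega))
  have hsum := measure_iUnion (μ := μ) hdisj fun n => hY (measurableSet_singleton _)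
  rw [← hunion] at hsum
  rw [measureReal_def, hsum, ENNReal.tsum_toReal_eq fun n => measure_ne_top μ _]
  exact ENNReal.hasSum_toReal (hsum ▸ measure_ne_top μ _)

theorem measureReal_natAbs_preimage_singleton [IsFiniteMeasure μ] {X : Ω → ℤ}
    (hX : Measurable X) (hsym : ∀ k : ℤ, μ.real (X ⁻¹' {k}) = μ.real (X ⁻¹' {-k})) (n : ℕ) :
    μ.real ((fun ω => (X ω).natAbs) ⁻¹' {n}) =
      (if n = 0 then 1 else 2) * μ.real (X ⁻¹' {(n : ℤ)}) := by
  rcases n with _ | n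
  · simp [Set.preimage, Int.natAbs_eq_zero]
  · have hunion : (fun ω => (X ω).natAbs) ⁻¹' {n + 1} =
        X ⁻¹' {((n + 1 : ℕ) : ℤ)} ∪ X ⁻¹' {-((n + 1 : ℕ) : ℤ)} := by
      ext ω
      simp only [Set.mem_preimage, Set.mem_singleton_iff, Set.mem_union]
      omega
    rw [hunion, measureReal_union (Disjoint.preimage X (Set.disjoint_singleton.2 (by omega)))
      (hX (measurableSet_singleton _)), ← hsym]
    simp only [Nat.add_one_ne_zero, if_false]
    ring

theorem hasSum_integral_natCast (hY : Measurable Y) (hint : Integrable (fun ω => (Y ω : ℝ)) μ) :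
    HasSum (fun j => μ.real {ω | j < Y ω}) (∫ ω, (Y ω : ℝ) ∂μ) := by
  simpa using hasSum_integral_comp_nat hY Nat.mono_cast Nat.cast_zero hint

theorem hasSum_integral_natCast_rpow (hY : Measurable Y) {β : ℝ} (hβ : 0 < β)
    (hint : Integrable (fun ω => (Y ω : ℝ) ^ β) μ) :
    HasSum (fun j : ℕ => (((j : ℝ) + 1) ^ β - (j : ℝ) ^ β) * μ.real {ω | j < Y ω})
      (∫ ω, (Y ω : ℝ) ^ β ∂μ) := by
  simpa using hasSum_integral_comp_nat hY (f := fun n => (n : ℝ) ^ β)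
    (fun m n h => rpow_le_rpow m.cast_nonneg (Nat.cast_le.2 h) hβ.le)
    (by simp [zero_rpow hβ.ne']) hint

theorem logConcaveSeq_measureReal_natAbs_ge [IsFiniteMeasure μ] {X : Ω → ℤ} (hX : Measurable X)
    (hlc : IsLogConcavePMF fun k => μ.real (X ⁻¹' {k}))
    (hsym : ∀ k : ℤ, μ.real (X ⁻¹' {k}) = μ.real (X ⁻¹' {-k})) :
    LogConcaveSeq fun k => μ.real {ω | k ≤ (X ω).natAbs} := by
  have hY : Measurable fun ω => (X ω).natAbs :=
    (measurable_from_top : Measurable Int.natAbs).comp hX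
  have hpmf := measureReal_natAbs_preimage_singleton hX hsym
  have htail : (fun k => μ.real {ω | k ≤ (X ω).natAbs}) =
      fun k => ∑' n, μ.real ((fun ω => (X ω).natAbs) ⁻¹' {n + k}) :=
    funext fun k => (hasSum_measureReal_preimage_add hY k).tsum_eq.symm
  simp only [htail, hpmf]
  exact (hlc.logConcaveSeq_fold fun k => measureReal_nonneg).tail
    (by simpa [hpmf] using (hasSum_measureReal_preimage_add (μ := μ) hY 0).summable)

end

theorem rpow_one_div_le_mul_of_le_mul_rpow {T C M β : ℝ} (hβ : 0 < β) (hT : 0 ≤ T)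
    (hC : 0 ≤ C) (hM : 0 ≤ M) (h : T ≤ C * M ^ β) : T ^ (1 / β) ≤ C ^ (1 / β) * M := by
  calc T ^ (1 / β) ≤ (C * M ^ β) ^ (1 / β) := rpow_le_rpow hT h (by positivity)
    _ = C ^ (1 / β) * M := by
        rw [mul_rpow hC (by positivity), ← rpow_mul hM, mul_one_div_cancel hβ.ne', rpow_one]

/-- If `X` is a symmetric log-concave integer-valued random variable, then for all `β ≥ 1`,
`E[|X|^β]^(1/β) ≤ Γ(β+1)^(1/β) · (E[|X|] + 1)`. -/
theorem symmetric_moment_bound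
    {Ω : Type*} [MeasureSpace Ω] [IsProbabilityMeasure (ℙ : Measure Ω)]
    (X : Ω → ℤ) (hX : Measurable X)
    (hlc : IsLogConcavePMF (fun k => (ℙ (X ⁻¹' {k})).toReal))
    (hsym : ∀ k : ℤ, (ℙ (X ⁻¹' {k})).toReal = (ℙ (X ⁻¹' {-k})).toReal)
    (β : ℝ) (hβ : 1 ≤ β) :
    (∫ ω, |(X ω : ℝ)| ^ β) ^ (1 / β) ≤
      Real.Gamma (β + 1) ^ (1 / β) * ((∫ ω, |(X ω : ℝ)|) + 1) := by
  have hβ0 : 0 < β := by linarith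
  by_cases hint : Integrable (fun ω => |(X ω : ℝ)| ^ β)
  swap
  · rw [integral_undef hint, zero_rpow (one_div_pos.2 hβ0).ne']
    have : 0 ≤ ∫ ω, |(X ω : ℝ)| := integral_nonneg fun ω => abs_nonneg _
    positivity
  have hint1 : Integrable (fun ω => |(X ω : ℝ)|) := by
    simpa using integrable_norm_rpow_of_le (f := fun ω => (X ω : ℝ))
      (measurable_from_top.comp hX).aestronglyMeasurable zero_le_one hβ0.le hβ (by simpa using hint)
  have hY : Measurable fun ω => (X ω).natAbs :=
    (measurable_from_top : Measurable Int.natAbs).comp hX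
  have habs (ω : Ω) : |(X ω : ℝ)| = ((X ω).natAbs : ℝ) := by simp [Nat.cast_natAbs]
  simp only [habs] at hint hint1 ⊢
  refine rpow_one_div_le_mul_of_le_mul_rpow hβ0 (integral_nonneg fun ω => by positivity)
    (Gamma_pos_of_pos (by linarith)).le (by positivity) ?_
  exact (logConcaveSeq_measureReal_natAbs_ge hX hlc hsym).le_gamma_mul_add_one_rpow (by simp) hβ
    (hasSum_integral_natCast hY hint1) (hasSum_integral_natCast_rpow hY hβ0 hint)
end

section
/- If X is a log-concave integer-valued random variable, then for all t ≥ 0, P(|X − E[X]| ≥ t) ≤ 2·exp(−t / (2·(2·E[|X − E[X]|] + 1))). -/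
open MeasureTheory ProbabilityTheory
open scoped ProbabilityTheory

/-!
The tail `q n = P(X ≥ n)` of a log-concave law is again log-concave, so it lies below its chords
in the multiplicative sense. Markov's inequality for `(X - m)⁺` and `(m - X)⁺`, both of mean
`D / 2` where `D = E|X - m|`, gives `q a ≥ 1/2` at `a ≈ m - D` and `q b ≤ 1/6` at `b ≈ m + 3D`.
Over the window `[a, b]`, of length `h < 4D + 1`, the tail thus loses a factor `3`, and by
log-concavity it keeps losing at least that much per `h` steps beyond `b`: `q n ^ h ≤ 3^-(n - a)`,
which is the claimed exponential bound once `t > 2(2D + 1)`. For smaller `t` Markov's inequality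
alone suffices, and a union bound combines the two tails. Integrability of `X` comes from the same
geometric decay, applied to the mass function itself.
-/

open Filter Topology

lemma exists_pos_and_succ_lt {p : ℤ → ℝ} (hlim : Tendsto p atTop (𝓝 0)) {k : ℤ} (hk : 0 < p k) :
    ∃ k₀, 0 < p k₀ ∧ p (k₀ + 1) < p k₀ := by
  by_contra! hno
  have hmono : ∀ n, k ≤ n → p k ≤ p n := by
    intro n hn
    induction n, hn using Int.leInduction with
    | base => exact le_rfl
    | succ n _ ih => exact ih.trans (hno n (hk.trans_le ih))
  obtain ⟨N, hN⟩ := (hlim.eventually (gt_mem_nhds hk)).exists_forall_of_atTop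
  exact (hN (max N k) (le_max_left _ _)).not_ge (hmono _ (le_max_right _ _))

namespace IsLogConcavePMF

variable {p : ℤ → ℝ}

lemma neg (hp : IsLogConcavePMF p) : IsLogConcavePMF fun k => p (-k) := by
  refine ⟨fun k => ?_, fun a b c hab hbc ha hc => hp.2 (-c) (-b) (-a) (by omega) (by omega) hc ha⟩
  dsimp only
  rw [show -(k - 1) = -k + 1 by ring, show -(k + 1) = -k - 1 by ring, mul_comm]
  exact hp.1 (-k)

lemma mul_succ_le_succ_mul (hp : IsLogConcavePMF p) (hp0 : ∀ k, 0 ≤ p k) {i j : ℤ} (hij : i ≤ j) :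
    p i * p (j + 1) ≤ p (i + 1) * p j := by
  rcases (hp0 i).eq_or_lt with hi | hi
  · rw [← hi, zero_mul]
    exact mul_nonneg (hp0 _) (hp0 _)
  induction j, hij using Int.leInduction with
  | base => rw [mul_comm]
  | succ j hij ih =>
    rcases (hp0 (j + 1 + 1)).eq_or_lt with hj | hj
    · rw [← hj, mul_zero]
      exact mul_nonneg (hp0 _) (hp0 _)
    have hj0 : 0 < p j := hp.2 i j (j + 1 + 1) hij (by omega) hi hj
    have hj1 : 0 < p (j + 1) := hp.2 i (j + 1) (j + 1 + 1) (by omega) (by omega) hi hj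
    have hlc : p j * p (j + 1 + 1) ≤ p (j + 1) ^ 2 := by simpa using hp.1 (j + 1)
    refine le_of_mul_le_mul_right ?_ (mul_pos hj0 hj1)
    calc p i * p (j + 1 + 1) * (p j * p (j + 1))
        = (p i * p (j + 1)) * (p j * p (j + 1 + 1)) := by ring
      _ ≤ (p (i + 1) * p j) * p (j + 1) ^ 2 :=
          mul_le_mul ih hlc (mul_nonneg (hp0 _) (hp0 _)) (mul_nonneg (hp0 _) (hp0 _))
      _ = p (i + 1) * p (j + 1) * (p j * p (j + 1)) := by ring

lemma add_mul_pow_le_mul_pow (hp : IsLogConcavePMF p) (hp0 : ∀ k, 0 ≤ p k) {i j : ℤ} (hij : i ≤ j)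
    (n : ℕ) : p (j + n) * p i ^ n ≤ p j * p (i + 1) ^ n := by
  induction n with
  | zero => simp
  | succ n ih =>
    calc p (j + (n + 1 : ℕ)) * p i ^ (n + 1) = (p i * p (j + n + 1)) * p i ^ n := by
          push_cast; ring_nf
      _ ≤ (p (i + 1) * p (j + n)) * p i ^ n :=
          mul_le_mul_of_nonneg_right (hp.mul_succ_le_succ_mul hp0 (by omega))
            (pow_nonneg (hp0 i) n)
      _ = p (i + 1) * (p (j + n) * p i ^ n) := by ring
      _ ≤ p (i + 1) * (p j * p (i + 1) ^ n) := mul_le_mul_of_nonneg_left ih (hp0 _)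
      _ = p j * p (i + 1) ^ (n + 1) := by ring

lemma mul_pow_le_add_mul_pow (hp : IsLogConcavePMF p) (hp0 : ∀ k, 0 ≤ p k) {i j : ℤ} {n : ℕ}
    (hij : i + n ≤ j + 1) : p i * p (j + 1) ^ n ≤ p (i + n) * p j ^ n := by
  induction n with
  | zero => simp
  | succ n ih =>
    calc p i * p (j + 1) ^ (n + 1) = (p i * p (j + 1) ^ n) * p (j + 1) := by ring
      _ ≤ (p (i + n) * p j ^ n) * p (j + 1) :=
          mul_le_mul_of_nonneg_right (ih (by omega)) (hp0 _)
      _ = (p (i + n) * p (j + 1)) * p j ^ n := by ring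
      _ ≤ (p (i + n + 1) * p j) * p j ^ n :=
          mul_le_mul_of_nonneg_right (hp.mul_succ_le_succ_mul hp0 (by omega)) (pow_nonneg (hp0 _) _)
      _ = p (i + (n + 1 : ℕ)) * p j ^ (n + 1) := by push_cast; ring_nf

lemma pow_mul_pow_le_pow (hp : IsLogConcavePMF p) (hp0 : ∀ k, 0 ≤ p k) (a : ℤ) (h j : ℕ) :
    p a ^ j * p (a + h + j) ^ h ≤ p (a + h) ^ (h + j) := by
  rcases Nat.eq_zero_or_pos j with rfl | hj
  · simp
  cases h with
  | zero => simp
  | succ h =>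
    push_cast
    rcases (hp0 a).eq_or_lt with ha | ha
    · rw [← ha, zero_pow hj.ne', zero_mul]
      exact pow_nonneg (hp0 _) _
    rcases (hp0 (a + (h + 1) + j)).eq_or_lt with hn | hn
    · rw [← hn, zero_pow h.succ_ne_zero, mul_zero]
      exact pow_nonneg (hp0 _) _
    set x := p (a + h)
    set y := p (a + (h + 1))
    have hx : 0 < x := hp.2 a _ _ (by omega) (by omega) ha hn
    have hy : 0 < y := hp.2 a _ _ (by omega) (by omega) ha hn
    have hA : p a * y ^ (h + 1) ≤ y * x ^ (h + 1) := by
      simpa [add_assoc] using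
        hp.mul_pow_le_add_mul_pow hp0 (i := a) (j := a + h) (n := h + 1) (by omega)
    have hB : p (a + (h + 1) + j) * x ^ j ≤ y * y ^ j := by
      simpa [add_assoc] using
        hp.add_mul_pow_le_mul_pow hp0 (i := a + h) (j := a + (h + 1)) (by omega) j
    refine le_of_mul_le_mul_right (a := (x * y) ^ ((h + 1) * j)) ?_ (by positivity)
    calc p a ^ j * p (a + (h + 1) + j) ^ (h + 1) * (x * y) ^ ((h + 1) * j)
        = (p a * y ^ (h + 1)) ^ j * (p (a + (h + 1) + j) * x ^ j) ^ (h + 1) := by ring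
      _ ≤ (y * x ^ (h + 1)) ^ j * (y * y ^ j) ^ (h + 1) :=
          mul_le_mul (pow_le_pow_left₀ (by positivity) hA j)
            (pow_le_pow_left₀ (mul_nonneg (hp0 _) (by positivity)) hB (h + 1)) (by positivity)
            (by positivity)
      _ = y ^ (h + 1 + j) * (x * y) ^ ((h + 1) * j) := by ring

lemma pow_le_inv_three_pow (hp : IsLogConcavePMF p)
    (hp0 : ∀ k, 0 ≤ p k) {a : ℤ} {h j : ℕ} (ha : 2⁻¹ ≤ p a) (hb : p (a + h) ≤ 6⁻¹) :
    p (a + h + j) ^ h ≤ 3⁻¹ ^ (h + j) := by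
  have hchord : 2⁻¹ ^ j * p (a + h + j) ^ h ≤ 6⁻¹ ^ (h + j) :=
    calc 2⁻¹ ^ j * p (a + h + j) ^ h ≤ p a ^ j * p (a + h + j) ^ h :=
          mul_le_mul_of_nonneg_right (pow_le_pow_left₀ (by norm_num) ha j) (pow_nonneg (hp0 _) h)
      _ ≤ p (a + h) ^ (h + j) := hp.pow_mul_pow_le_pow hp0 a h j
      _ ≤ 6⁻¹ ^ (h + j) := pow_le_pow_left₀ (hp0 _) hb _
  calc p (a + h + j) ^ h = 2 ^ j * (2⁻¹ ^ j * p (a + h + j) ^ h) := by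
        rw [← mul_assoc, ← mul_pow]; norm_num
    _ ≤ 2 ^ (h + j) * 6⁻¹ ^ (h + j) :=
        mul_le_mul (pow_le_pow_right₀ (by norm_num) (by omega)) hchord
          (mul_nonneg (by positivity) (pow_nonneg (hp0 _) h)) (by positivity)
    _ = 3⁻¹ ^ (h + j) := by rw [← mul_pow]; norm_num

lemma summable_natCast_mul (hp : IsLogConcavePMF p) (hp0 : ∀ k, 0 ≤ p k)
    (hlim : Tendsto p atTop (𝓝 0)) : Summable fun n : ℕ => (n : ℝ) * p n := by
  by_cases hzero : ∀ n : ℕ, p n = 0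
  · simp [hzero]
  obtain ⟨n₁, hn₁⟩ := not_forall.1 hzero
  obtain ⟨k₀, hk₀, hdesc⟩ := exists_pos_and_succ_lt hlim ((hp0 _).lt_of_ne' hn₁)
  set r := p (k₀ + 1) / p k₀
  have hr0 : 0 ≤ r := div_nonneg (hp0 _) hk₀.le
  have hr1 : r < 1 := (div_lt_one hk₀).2 hdesc
  have hgeom (n : ℕ) : p (k₀ + n) ≤ p k₀ * r ^ n := by
    rw [div_pow, mul_div_assoc', le_div_iff₀ (pow_pos hk₀ n)]
    exact hp.add_mul_pow_le_mul_pow hp0 le_rfl n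
  have hsum : Summable fun n : ℕ => p k₀ * (((n : ℝ) + k₀.toNat) * r ^ n) := by
    have hnr : Summable fun n : ℕ => (n : ℝ) * r ^ n := by
      simpa using summable_pow_mul_geometric_of_norm_lt_one 1 (by rwa [Real.norm_of_nonneg hr0])
    simp_rw [add_mul]
    exact (hnr.add ((summable_geometric_of_lt_one hr0 hr1).mul_left _)).mul_left _
  refine (summable_nat_add_iff k₀.toNat).mp (hsum.of_nonneg_of_le (fun n => ?_) fun n => ?_)
  · exact mul_nonneg (Nat.cast_nonneg _) (hp0 _)
  · obtain ⟨d, hd⟩ : ∃ d : ℕ, ((n + k₀.toNat : ℕ) : ℤ) = k₀ + (n + d : ℕ) :=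
      ⟨(k₀.toNat - k₀).toNat, by omega⟩
    rw [hd, mul_left_comm]
    push_cast
    refine mul_le_mul_of_nonneg_left ((hgeom _).trans ?_) (by positivity)
    exact mul_le_mul_of_nonneg_left (pow_le_pow_of_le_one hr0 hr1.le (by omega)) hk₀.le

lemma summable_abs_mul (hp : IsLogConcavePMF p) (hp0 : ∀ k, 0 ≤ p k) (hs : Summable p) :
    Summable fun k : ℤ => |(k : ℝ)| * p k := by
  have hlim {f : ℤ → ℝ} (hf : Summable f) : Tendsto f atTop (𝓝 0) :=
    hf.tendsto_cofinite_zero.mono_left atTop_le_cofinite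
  refine Summable.of_nat_of_neg ?_ ?_
  · simpa using hp.summable_natCast_mul hp0 (hlim hs)
  · simpa using
      hp.neg.summable_natCast_mul (fun k => hp0 _) (hlim (hs.comp_injective neg_injective))

lemma tsum_nat_add (hp : IsLogConcavePMF p) (hp0 : ∀ k, 0 ≤ p k) (hs : Summable p) :
    IsLogConcavePMF fun n => ∑' j : ℕ, p (n + j) := by
  set T : ℤ → ℝ := fun n => ∑' j : ℕ, p (n + j)
  have hsT (n : ℤ) : Summable fun j : ℕ => p (n + j) :=
    hs.comp_injective fun a b hab => by simpa using hab
  have hsucc (n : ℤ) : T n = p n + T (n + 1) := by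
    simp only [T]
    rw [(hsT n).tsum_eq_zero_add]
    simp only [Nat.cast_zero, add_zero, Nat.cast_succ, ← add_assoc, add_right_comm _ _ (1 : ℤ)]
  have hcross (n : ℤ) : p n * T (n + 1 + 1) ≤ p (n + 1) * T (n + 1) := by
    simp only [T]
    rw [← tsum_mul_left, ← tsum_mul_left]
    refine ((hsT _).mul_left _).tsum_le_tsum (fun j => ?_) ((hsT _).mul_left _)
    rw [show n + 1 + 1 + j = n + 1 + j + 1 by ring]
    exact hp.mul_succ_le_succ_mul hp0 (by omega)
  refine ⟨fun k => ?_, fun a b c _ hbc _ hc =>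
    hc.trans_le (antitone_int_of_succ_le (fun n => by linarith [hsucc n, hp0 n]) hbc)⟩
  calc T (k - 1) * T (k + 1) = p (k - 1) * T (k - 1 + 1 + 1) + T k * T (k + 1) := by
        rw [hsucc (k - 1), sub_add_cancel]; ring
    _ ≤ p (k - 1 + 1) * T (k - 1 + 1) + T k * T (k + 1) := add_le_add_left (hcross _) _
    _ = T k * (p k + T (k + 1)) := by rw [sub_add_cancel]; ring
    _ = T k ^ 2 := by rw [← hsucc, sq]

end IsLogConcavePMF

section Measure

variable {Ω : Type*} [MeasurableSpace Ω] {μ : Measure Ω}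

lemma summable_measureReal_preimage_singleton [IsFiniteMeasure μ] {X : Ω → ℤ}
    (hX : Measurable X) : Summable fun k : ℤ => μ.real (X ⁻¹' {k}) :=
  ENNReal.summable_toReal <| ne_top_of_le_ne_top (measure_ne_top μ Set.univ) <|
    tsum_measure_le_measure_univ (fun k => (hX (measurableSet_singleton k)).nullMeasurableSet)
      fun _ _ hij => ((Set.disjoint_singleton.2 hij).preimage X).aedisjoint

lemma measureReal_preimage_Ici_eq_tsum [IsFiniteMeasure μ] {X : Ω → ℤ} (hX : Measurable X) (n : ℤ) :
    μ.real (X ⁻¹' Set.Ici n) = ∑' j : ℕ, μ.real (X ⁻¹' {n + j}) := by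
  have hU : X ⁻¹' Set.Ici n = ⋃ j : ℕ, X ⁻¹' {n + j} := by
    ext ω
    simp only [Set.mem_preimage, Set.mem_Ici, Set.mem_iUnion, Set.mem_singleton_iff]
    exact ⟨fun h => ⟨(X ω - n).toNat, by omega⟩, fun ⟨j, hj⟩ => by omega⟩
  rw [measureReal_def, hU,
    measure_iUnion (fun i j hij => (Set.disjoint_singleton.2 (by omega)).preimage X)
      (fun j => hX (measurableSet_singleton _)),
    ENNReal.tsum_toReal_eq (fun _ => measure_ne_top _ _)]
  rfl

lemma measureReal_preimage_Ici_ceil (X : Ω → ℤ) (s : ℝ) :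
    μ.real (X ⁻¹' Set.Ici ⌈s⌉) = μ.real {ω | s ≤ X ω} := by
  congr 1
  ext ω
  simp [Int.ceil_le]

lemma integrable_of_summable_abs_mul [IsFiniteMeasure μ] {X : Ω → ℤ} (hX : Measurable X)
    (hs : Summable fun k : ℤ => |(k : ℝ)| * μ.real (X ⁻¹' {k})) :
    Integrable (fun ω => (X ω : ℝ)) μ := by
  have hlaw : Integrable (fun k : ℤ => (k : ℝ)) (μ.map X) := by
    rw [← (μ.map X).sum_smul_dirac, integrable_sum_dirac_iff (fun k => measure_ne_top _ _)]
    simpa [Measure.map_apply hX (measurableSet_singleton _), mul_comm, measureReal_def] using hs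
  exact (integrable_map_measure (measurable_of_countable _).aestronglyMeasurable
    hX.aemeasurable).mp hlaw

lemma IsLogConcavePMF.integrable [IsFiniteMeasure μ] {X : Ω → ℤ} (hX : Measurable X)
    (hlc : IsLogConcavePMF fun k => μ.real (X ⁻¹' {k})) : Integrable (fun ω => (X ω : ℝ)) μ :=
  integrable_of_summable_abs_mul hX <|
    hlc.summable_abs_mul (fun _ => measureReal_nonneg) (summable_measureReal_preimage_singleton hX)

lemma IsLogConcavePMF.measureReal_preimage_Ici [IsFiniteMeasure μ] {X : Ω → ℤ}
    (hX : Measurable X) (hlc : IsLogConcavePMF fun k => μ.real (X ⁻¹' {k})) :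
    IsLogConcavePMF fun n => μ.real (X ⁻¹' Set.Ici n) := by
  convert hlc.tsum_nat_add (fun _ => measureReal_nonneg)
    (summable_measureReal_preimage_singleton hX) using 1
  exact funext (measureReal_preimage_Ici_eq_tsum hX)

lemma integral_max_zero_eq_half [IsProbabilityMeasure μ] {Y : Ω → ℝ} (hY : Integrable Y μ) :
    ∫ ω, max (Y ω - ∫ ω, Y ω ∂μ) 0 ∂μ = (∫ ω, |Y ω - ∫ ω, Y ω ∂μ| ∂μ) / 2 := by
  set Z : Ω → ℝ := fun ω => Y ω - ∫ ω, Y ω ∂μ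
  have hZ : Integrable Z μ := hY.sub (integrable_const _)
  have hZ0 : ∫ ω, Z ω ∂μ = 0 := by simp [Z, integral_sub hY (integrable_const _)]
  have hmax (x : ℝ) : max x 0 = (x + |x|) / 2 := by
    rcases le_total 0 x with hx | hx
    · rw [max_eq_left hx, abs_of_nonneg hx]; ring
    · rw [max_eq_right hx, abs_of_nonpos hx]; ring
  simp_rw [hmax]
  rw [integral_div, integral_add hZ hZ.abs, hZ0, zero_add]

lemma measureReal_integral_add_le_le [IsProbabilityMeasure μ] {Y : Ω → ℝ} (hY : Integrable Y μ)
    {s : ℝ} (hs : 0 < s) :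
    μ.real {ω | (∫ ω, Y ω ∂μ) + s ≤ Y ω} ≤ (∫ ω, |Y ω - ∫ ω, Y ω ∂μ| ∂μ) / (2 * s) := by
  have hmarkov := mul_meas_ge_le_integral_of_nonneg (ae_of_all μ fun ω => le_max_right _ 0)
    (hY.sub (integrable_const (∫ ω, Y ω ∂μ))).pos_part s
  simp only [Pi.sub_apply] at hmarkov
  rw [integral_max_zero_eq_half hY, ← le_div_iff₀' hs, div_div] at hmarkov
  refine le_trans (measureReal_mono ?_) hmarkov
  intro ω hω
  simp only [Set.mem_ofPred_eq] at hω ⊢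
  exact le_max_of_le_left (by linarith)

lemma measureReal_le_integral_sub_le [IsProbabilityMeasure μ] {Y : Ω → ℝ} (hY : Integrable Y μ)
    {s : ℝ} (hs : 0 < s) :
    μ.real {ω | Y ω ≤ (∫ ω, Y ω ∂μ) - s} ≤ (∫ ω, |Y ω - ∫ ω, Y ω ∂μ| ∂μ) / (2 * s) := by
  have h := measureReal_integral_add_le_le hY.neg hs
  convert h using 2
  · ext ω
    simp only [Set.mem_ofPred_eq, Pi.neg_apply, integral_neg]
    constructor <;> intro h <;> linarith
  · congr 1 with ω
    simp only [Pi.neg_apply, integral_neg]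
    rw [neg_sub_neg, abs_sub_comm]

lemma measureReal_le_abs_sub_le [IsFiniteMeasure μ] (Y : Ω → ℝ) (m t : ℝ) :
    μ.real {ω | t ≤ |Y ω - m|} ≤ μ.real {ω | m + t ≤ Y ω} + μ.real {ω | Y ω ≤ m - t} := by
  refine le_trans (measureReal_mono fun ω hω => ?_) (measureReal_union_le _ _)
  simp only [Set.mem_ofPred_eq] at hω
  rcases le_abs'.1 hω with h | h
  · exact Or.inr (by simp only [Set.mem_ofPred_eq]; linarith)
  · exact Or.inl (by simp only [Set.mem_ofPred_eq]; linarith)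

end Measure

lemma inv_three_le_exp_neg_one : (3 : ℝ)⁻¹ ≤ Real.exp (-1) := by
  rw [Real.exp_neg]
  exact inv_anti₀ (Real.exp_pos 1) (Real.exp_one_lt_d9.le.trans (by norm_num))

lemma le_exp_neg_div_of_pow_le {x c t : ℝ} {h k : ℕ} (hh : h ≠ 0)
    (hhc : (h : ℝ) + 1 ≤ c) (hct : c ≤ t) (hkt : t - 1 ≤ k) (hxk : x ^ h ≤ 3⁻¹ ^ k) :
    x ≤ Real.exp (-t / c) := by
  have hc : 0 < c := by linarith [(Nat.cast_nonneg h : (0 : ℝ) ≤ h)]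
  have hth : t * h / c ≤ k := by
    rw [div_le_iff₀ hc]
    nlinarith [mul_nonneg (hc.le.trans hct) (by linarith : 0 ≤ c - 1 - h)]
  refine le_of_pow_le_pow_left₀ hh (Real.exp_pos _).le ?_
  calc x ^ h ≤ 3⁻¹ ^ k := hxk
    _ ≤ Real.exp (-1) ^ k := pow_le_pow_left₀ (by norm_num) inv_three_le_exp_neg_one k
    _ = Real.exp (-k) := by rw [← Real.exp_nat_mul]; ring_nf
    _ ≤ Real.exp (-t / c * h) := by
        rw [Real.exp_le_exp, neg_div, neg_mul, neg_le_neg_iff, div_mul_eq_mul_div]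
        exact hth
    _ = Real.exp (-t / c) ^ h := by rw [← Real.exp_nat_mul]; ring_nf

section OneSided

variable {Ω : Type*} [MeasurableSpace Ω] {μ : Measure Ω} [IsProbabilityMeasure μ] {X : Ω → ℤ}
  {m D t : ℝ}

lemma inv_two_le_measureReal_preimage_Ici (hX : Measurable X)
    (hint : Integrable (fun ω => (X ω : ℝ)) μ) (hm : m = ∫ ω, (X ω : ℝ) ∂μ)
    (hD : D = ∫ ω, |(X ω : ℝ) - m| ∂μ) (hD0 : 0 < D) :
    2⁻¹ ≤ μ.real (X ⁻¹' Set.Ici (⌊m - D⌋ + 1)) := by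
  have hcompl : (X ⁻¹' Set.Ici (⌊m - D⌋ + 1))ᶜ = {ω | (X ω : ℝ) ≤ m - D} := by
    ext ω
    simp [Int.le_floor]
  have h := measureReal_le_integral_sub_le hint hD0
  rw [← hm, ← hD, ← hcompl, probReal_compl_eq_one_sub (hX measurableSet_Ici),
    div_mul_cancel_right₀ hD0.ne'] at h
  linarith

lemma measureReal_preimage_Ici_le_inv_six (hint : Integrable (fun ω => (X ω : ℝ)) μ)
    (hm : m = ∫ ω, (X ω : ℝ) ∂μ) (hD : D = ∫ ω, |(X ω : ℝ) - m| ∂μ) (hD0 : 0 < D) :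
    μ.real (X ⁻¹' Set.Ici ⌈m + 3 * D⌉) ≤ 6⁻¹ := by
  have h := measureReal_integral_add_le_le hint (s := 3 * D) (by positivity)
  rw [← hm, ← hD, ← measureReal_preimage_Ici_ceil] at h
  refine h.trans (le_of_eq ?_)
  field_simp
  norm_num

lemma measureReal_add_le_le_exp_of_lt (hX : Measurable X)
    (hlc : IsLogConcavePMF fun k => μ.real (X ⁻¹' {k})) (hint : Integrable (fun ω => (X ω : ℝ)) μ)
    (hm : m = ∫ ω, (X ω : ℝ) ∂μ) (hD : D = ∫ ω, |(X ω : ℝ) - m| ∂μ) (hD0 : 0 < D)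
    (ht : 2 * (2 * D + 1) < t) :
    μ.real {ω | m + t ≤ X ω} ≤ Real.exp (-t / (2 * (2 * D + 1))) := by
  set q : ℤ → ℝ := fun n => μ.real (X ⁻¹' Set.Ici n)
  have hq : IsLogConcavePMF q := hlc.measureReal_preimage_Ici hX
  have hq0 (n : ℤ) : 0 ≤ q n := measureReal_nonneg
  set a := ⌊m - D⌋ + 1
  set b := ⌈m + 3 * D⌉
  set n := ⌈m + t⌉
  have hqa : 2⁻¹ ≤ q a := inv_two_le_measureReal_preimage_Ici hX hint hm hD hD0
  have hqb : q b ≤ 6⁻¹ := measureReal_preimage_Ici_le_inv_six hint hm hD hD0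
  have hab : a < b := by
    by_contra! hba
    have : q a ≤ q b := measureReal_mono (Set.preimage_mono (Set.Ici_subset_Ici.2 hba))
    linarith
  have hbn : b ≤ n := Int.ceil_mono (by linarith)
  obtain ⟨h, hh⟩ := Int.eq_ofNat_of_zero_le (sub_nonneg.2 hab.le)
  obtain ⟨j, hj⟩ := Int.eq_ofNat_of_zero_le (sub_nonneg.2 hbn)
  have hpow : q n ^ h ≤ 3⁻¹ ^ (h + j) := by
    have hb : q (a + h) ≤ 6⁻¹ := by rwa [show a + h = b by omega]
    simpa [show a + h + j = n by omega] using hq.pow_le_inv_three_pow hq0 hqa (j := j) hb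
  have hhr : (h : ℝ) = b - a := by exact_mod_cast hh.symm
  have hjr : (j : ℝ) = n - b := by exact_mod_cast hj.symm
  have ha : m - D < a := by push_cast [a]; exact Int.lt_floor_add_one _
  have ha' : (a : ℝ) ≤ m - D + 1 := by push_cast [a]; linarith [Int.floor_le (m - D)]
  have hb : (b : ℝ) < m + 3 * D + 1 := Int.ceil_lt_add_one _
  have hn : m + t ≤ n := Int.le_ceil _
  rw [← measureReal_preimage_Ici_ceil]
  refine le_exp_neg_div_of_pow_le (by omega) (by linarith) ht.le ?_ hpow
  push_cast
  linarith

lemma measureReal_add_le_le_exp (hX : Measurable X)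
    (hlc : IsLogConcavePMF fun k => μ.real (X ⁻¹' {k})) (hint : Integrable (fun ω => (X ω : ℝ)) μ)
    (hm : m = ∫ ω, (X ω : ℝ) ∂μ) (hD : D = ∫ ω, |(X ω : ℝ) - m| ∂μ)
    (ht : 2 * (2 * D + 1) * Real.log 2 < t) :
    μ.real {ω | m + t ≤ X ω} ≤ Real.exp (-t / (2 * (2 * D + 1))) := by
  have hD0 : 0 ≤ D := hD ▸ integral_nonneg fun _ => abs_nonneg _
  have hlog : 1 / 2 < Real.log 2 := lt_trans (by norm_num) Real.log_two_gt_d9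
  have ht0 : 0 < t := lt_of_le_of_lt (by positivity) ht
  have hmarkov : μ.real {ω | m + t ≤ X ω} ≤ D / (2 * t) := by
    simpa only [← hm, ← hD] using measureReal_integral_add_le_le hint ht0
  rcases hD0.eq_or_lt with hD0 | hDpos
  · rw [← hD0, zero_div] at hmarkov
    exact hmarkov.trans (Real.exp_pos _).le
  rcases le_or_gt t (2 * (2 * D + 1)) with hsmall | hlarge
  · calc μ.real {ω | m + t ≤ X ω} ≤ D / (2 * t) := hmarkov
      _ ≤ 3⁻¹ := by rw [div_le_iff₀ (by positivity)]; nlinarith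
      _ ≤ Real.exp (-1) := inv_three_le_exp_neg_one
      _ ≤ Real.exp (-t / (2 * (2 * D + 1))) := by
          rw [Real.exp_le_exp, neg_div, neg_le_neg_iff, div_le_one (by positivity)]
          exact hsmall
  · exact measureReal_add_le_le_exp_of_lt hX hlc hint hm hD hDpos hlarge

lemma measureReal_le_sub_le_exp (hX : Measurable X)
    (hlc : IsLogConcavePMF fun k => μ.real (X ⁻¹' {k})) (hint : Integrable (fun ω => (X ω : ℝ)) μ)
    (hm : m = ∫ ω, (X ω : ℝ) ∂μ) (hD : D = ∫ ω, |(X ω : ℝ) - m| ∂μ)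
    (ht : 2 * (2 * D + 1) * Real.log 2 < t) :
    μ.real {ω | X ω ≤ m - t} ≤ Real.exp (-t / (2 * (2 * D + 1))) := by
  have hlc' : IsLogConcavePMF fun k => μ.real ((fun ω => -X ω) ⁻¹' {k}) := by
    convert hlc.neg using 3 with k
    ext ω
    simp [neg_eq_iff_eq_neg]
  have hD' : D = ∫ ω, |((-X ω : ℤ) : ℝ) - -m| ∂μ := by
    simp only [hD, Int.cast_neg, neg_sub_neg, abs_sub_comm]
  convert measureReal_add_le_le_exp hX.neg hlc' (by simpa using hint.neg)
    (by simp [hm, integral_neg]) hD' ht using 2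
  ext ω
  simp only [Set.mem_ofPred_eq, Pi.neg_apply, Int.cast_neg]
  constructor <;> intro h <;> linarith

end OneSided

theorem concentration_bound_general
    {Ω : Type*} [MeasureSpace Ω] [IsProbabilityMeasure (ℙ : Measure Ω)]
    (X : Ω → ℤ) (hX : Measurable X)
    (hlc : IsLogConcavePMF (fun k => (ℙ (X ⁻¹' {k})).toReal))
    (m : ℝ) (hm : m = ∫ ω, (X ω : ℝ))
    (t : ℝ) :
    (ℙ {ω | t ≤ |(X ω : ℝ) - m|}).toReal ≤
      2 * Real.exp (-t / (2 * (2 * (∫ ω, |(X ω : ℝ) - m|) + 1))) := by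
  set D := ∫ ω, |(X ω : ℝ) - m|
  rcases le_or_gt t (2 * (2 * D + 1) * Real.log 2) with hsmall | hlarge
  · have hD0 : 0 ≤ D := integral_nonneg fun _ => abs_nonneg _
    have h : Real.exp (-Real.log 2) ≤ Real.exp (-t / (2 * (2 * D + 1))) := by
      rw [Real.exp_le_exp, neg_div, neg_le_neg_iff, div_le_iff₀ (by positivity)]
      linarith
    rw [Real.exp_neg, Real.exp_log two_pos] at h
    have hle : (ℙ {ω | t ≤ |(X ω : ℝ) - m|}).toReal ≤ 1 := measureReal_le_one
    linarith
  have hint := hlc.integrable hX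
  calc (ℙ {ω | t ≤ |(X ω : ℝ) - m|}).toReal
      ≤ (ℙ {ω | m + t ≤ X ω}).toReal + (ℙ {ω | X ω ≤ m - t}).toReal :=
        measureReal_le_abs_sub_le _ m t
    _ ≤ Real.exp (-t / (2 * (2 * D + 1))) + Real.exp (-t / (2 * (2 * D + 1))) :=
        add_le_add (measureReal_add_le_le_exp hX hlc hint hm rfl hlarge)
          (measureReal_le_sub_le_exp hX hlc hint hm rfl hlarge)
    _ = 2 * Real.exp (-t / (2 * (2 * D + 1))) := by ring

/-- If `X` is a log-concave integer-valued random variable, then for all `t ≥ 0`,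
`P(|X - E[X]| ≥ t) ≤ 2·exp(−t / (2·(2·E[|X − E[X]|] + 1)))`. -/
theorem concentration_bound
    {Ω : Type*} [MeasureSpace Ω] [IsProbabilityMeasure (ℙ : Measure Ω)]
    (X : Ω → ℤ) (hX : Measurable X)
    (hlc : IsLogConcavePMF (fun k => (ℙ (X ⁻¹' {k})).toReal))
    (m : ℝ) (hm : m = ∫ ω, (X ω : ℝ))
    (t : ℝ) (ht : 0 ≤ t) :
    (ℙ {ω | t ≤ |(X ω : ℝ) - m|}).toReal ≤
      2 * Real.exp (-t / (2 * (2 * (∫ ω, |(X ω : ℝ) - m|) + 1))) :=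
  concentration_bound_general X hX hlc m hm t
end

section
/- If X is a log-concave integer-valued random variable with probability mass function p and with Var(X) ≤ 1, then E[log²(p(X))] ≤ 39. -/
/-!
A log-concave mass function has geometric tails, so `(X - m)²` is integrable and the variance
bound yields the Chebyshev estimate `(k - m)² p(k) ≤ 1` for every `k`. Since
`-log x · x^ε ≤ e⁻¹ / ε` on `(0, 1]`, every term `p(k) log² p(k)` is at most `4e⁻²`, and at
distance `i ≥ 2` from `m` it is at most `64e⁻² i^(-3/2) ≤ 128e⁻² (1/√(i-1) - 1/√i)`, which
telescopes. Summing on both sides of `m` gives `E[log² p(X)] ≤ 272e⁻² < 39`.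
-/

open MeasureTheory ProbabilityTheory
open scoped ProbabilityTheory

open Real Finset Filter Topology

lemma summable_sq_add_mul_of_le_geometric {q : ℕ → ℝ} (hq0 : ∀ i, 0 ≤ q i) {r : ℝ}
    (hr0 : 0 ≤ r) (hr1 : r < 1) (hq : ∀ i, q i ≤ r ^ i) (d : ℝ) :
    Summable fun i : ℕ => ((i : ℝ) + d) ^ 2 * q i := by
  have hr : ‖r‖ < 1 := by rwa [norm_of_nonneg hr0]
  have hgeom : Summable fun i : ℕ => ((i : ℝ) + d) ^ 2 * r ^ i := by
    simp_rw [add_sq, add_mul]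
    refine ((summable_pow_mul_geometric_of_norm_lt_one 2 hr).add ?_).add
      ((summable_geometric_of_norm_lt_one hr).mul_left (d ^ 2))
    simpa [mul_assoc, mul_comm, mul_left_comm] using
      (summable_pow_mul_geometric_of_norm_lt_one 1 hr).mul_left (2 * d)
  exact hgeom.of_nonneg_of_le (fun i => mul_nonneg (sq_nonneg _) (hq0 i))
    fun i => mul_le_mul_of_nonneg_left (hq i) (sq_nonneg _)

lemma summable_sq_sub_mul_of_le_geometric {p : ℤ → ℝ} (hp0 : ∀ k, 0 ≤ p k) {c : ℕ} {r : ℝ}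
    (hr0 : 0 ≤ r) (hr1 : r < 1) (hright : ∀ i : ℕ, p (c + i) ≤ r ^ i)
    (hleft : ∀ i : ℕ, p (-(c + i)) ≤ r ^ i) (m : ℝ) :
    Summable fun k : ℤ => ((k : ℝ) - m) ^ 2 * p k := by
  refine .of_nat_of_neg ((summable_nat_add_iff c).1 ?_) ((summable_nat_add_iff c).1 ?_)
  · refine (summable_sq_add_mul_of_le_geometric (q := fun i => p (c + i)) (fun _ => hp0 _) hr0
      hr1 hright (c - m)).congr fun i => ?_
    rw [Nat.cast_add, add_comm (i : ℤ)]
    push_cast; ring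
  · refine (summable_sq_add_mul_of_le_geometric (q := fun i => p (-(c + i))) (fun _ => hp0 _)
      hr0 hr1 hleft (c + m)).congr fun i => ?_
    rw [Nat.cast_add, add_comm (i : ℤ)]
    push_cast; ring

lemma le_pow_mul_of_succ_le_mul {p : ℤ → ℝ} {a : ℤ} {r : ℝ} (hr : 0 ≤ r)
    (h : ∀ k, a ≤ k → p (k + 1) ≤ r * p k) (i : ℕ) : p (a + i) ≤ r ^ i * p a := by
  induction i with
  | zero => simp
  | succ i ih =>
    calc p (a + (i + 1 : ℕ)) = p (a + i + 1) := by push_cast; ring_nf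
      _ ≤ r * p (a + i) := h _ (by omega)
      _ ≤ r * (r ^ i * p a) := mul_le_mul_of_nonneg_left ih hr
      _ = r ^ (i + 1) * p a := by ring

lemma exists_succ_lt_of_summable {p : ℤ → ℝ} (hsum : Summable p) {k₀ : ℤ} (hk₀ : 0 < p k₀) :
    ∃ a, p (a + 1) < p a := by
  by_contra! hmono
  have hlim : Tendsto p atTop (𝓝 0) := hsum.tendsto_cofinite_zero.mono_left atTop_le_cofinite
  exact hk₀.not_ge (ge_of_tendsto hlim (eventually_atTop.2
    ⟨k₀, fun k hk => monotone_int_of_le_succ hmono hk⟩))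

namespace IsLogConcavePMF

variable {p : ℤ → ℝ}

lemma comp_neg (h : IsLogConcavePMF p) : IsLogConcavePMF fun k => p (-k) := by
  refine ⟨fun k => ?_, fun a b c hab hbc ha hc => h.2 (-c) (-b) (-a) (by omega) (by omega) hc ha⟩
  show p (-(k - 1)) * p (-(k + 1)) ≤ p (-k) ^ 2
  rw [show -(k - 1) = -k + 1 by ring, show -(k + 1) = -k - 1 by ring, mul_comm]
  exact h.1 (-k)

lemma succ_le_mul (h : IsLogConcavePMF p) (hp0 : ∀ k, 0 ≤ p k) {a : ℤ} (ha : 0 < p a) :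
    ∀ k, a ≤ k → p (k + 1) ≤ p (a + 1) / p a * p k := by
  set r := p (a + 1) / p a
  intro k hk
  induction k, hk using Int.leInduction with
  | base => rw [div_mul_cancel₀ _ ha.ne']
  | succ k hak ih =>
    rcases (hp0 k).eq_or_lt with hk0 | hkpos
    · have : p (k + 1 + 1) = 0 := by
        by_contra hne
        have := h.2 a k (k + 1 + 1) hak (by omega) ha ((hp0 _).lt_of_ne' hne)
        linarith
      rw [this]
      exact mul_nonneg (div_nonneg (hp0 _) ha.le) (hp0 _)
    · have hlc := h.1 (k + 1)
      rw [add_sub_cancel_right] at hlc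
      have : p k * p (k + 1 + 1) ≤ p k * (r * p (k + 1)) := by nlinarith [hp0 (k + 1)]
      exact le_of_mul_le_mul_left this hkpos

lemma exists_succ_le_mul (h : IsLogConcavePMF p) (hp0 : ∀ k, 0 ≤ p k) (hsum : Summable p)
    {k₀ : ℤ} (hk₀ : 0 < p k₀) :
    ∃ a r, 0 ≤ r ∧ r < 1 ∧ ∀ k, a ≤ k → p (k + 1) ≤ r * p k := by
  obtain ⟨a, hlt⟩ := exists_succ_lt_of_summable hsum hk₀
  have ha : 0 < p a := (hp0 _).trans_lt hlt
  exact ⟨a, _, div_nonneg (hp0 _) ha.le, (div_lt_one ha).2 hlt, h.succ_le_mul hp0 ha⟩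

lemma summable_sq_sub_mul (h : IsLogConcavePMF p) (hp0 : ∀ k, 0 ≤ p k) (hp : HasSum p 1)
    (m : ℝ) : Summable fun k : ℤ => ((k : ℝ) - m) ^ 2 * p k := by
  have hp1 (k : ℤ) : p k ≤ 1 := le_hasSum hp k fun j _ => hp0 j
  obtain ⟨k₀, hk₀⟩ : ∃ k, 0 < p k := by
    by_contra! hzero
    have : p = 0 := funext fun k => le_antisymm (hzero k) (hp0 k)
    exact one_ne_zero (hp.unique (this ▸ hasSum_zero))
  obtain ⟨a, r, hr0, hr1, hr⟩ := h.exists_succ_le_mul hp0 hp.summable hk₀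
  obtain ⟨b, s, hs0, hs1, hs⟩ := h.comp_neg.exists_succ_le_mul (fun _ => hp0 _)
    ((Equiv.neg ℤ).summable_iff.2 hp.summable) (k₀ := -k₀) (by simpa using hk₀)
  set c : ℕ := (max a b).toNat
  have hgeom {q : ℤ → ℝ} {t : ℝ} (hq0 : ∀ k, 0 ≤ q k) (hq1 : ∀ k, q k ≤ 1) {e : ℤ}
      (hec : e ≤ c) (ht : t ≤ max r s) (hq : ∀ k, e ≤ k → q (k + 1) ≤ t * q k) (i : ℕ) :
      q (c + i) ≤ max r s ^ i := by
    calc q (c + i) ≤ max r s ^ i * q c := le_pow_mul_of_succ_le_mul (le_max_of_le_left hr0)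
          (fun k hk => (hq k (hec.trans hk)).trans
            (mul_le_mul_of_nonneg_right ht (hq0 k))) i
      _ ≤ max r s ^ i := mul_le_of_le_one_right (by positivity) (hq1 _)
  refine summable_sq_sub_mul_of_le_geometric hp0 (le_max_of_le_left hr0) (max_lt hr1 hs1)
    (hgeom hp0 hp1 ?_ (le_max_left r s) hr) (hgeom (fun _ => hp0 _) (fun _ => hp1 _) ?_
      (le_max_right r s) hs) m <;> omega

end IsLogConcavePMF

lemma neg_log_mul_rpow_le {x ε : ℝ} (hx : 0 < x) (hε : 0 < ε) :
    -log x * x ^ ε ≤ exp (-1) / ε := by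
  have h := mul_exp_neg_le_exp_neg_one (-(log x * ε))
  rw [neg_neg, ← rpow_def_of_pos hx] at h
  rw [le_div_iff₀ hε]
  linarith

lemma sq_log_mul_self_le {x ε : ℝ} (hx0 : 0 ≤ x) (hx1 : x ≤ 1) (hε : 0 < ε) :
    log x ^ 2 * x ≤ (exp (-1) / ε) ^ 2 * x ^ (1 - 2 * ε) := by
  rcases hx0.eq_or_lt with rfl | hx
  · rw [mul_zero]; positivity
  have hsplit : log x ^ 2 * x = (-log x * x ^ ε) ^ 2 * x ^ (1 - 2 * ε) := by
    rw [mul_pow, neg_sq, ← rpow_natCast (x ^ ε), ← rpow_mul hx.le, mul_assoc, ← rpow_add hx,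
      show ε * ((2 : ℕ) : ℝ) + (1 - 2 * ε) = 1 by push_cast; ring, rpow_one]
  rw [hsplit]
  gcongr
  · exact mul_nonneg (neg_nonneg.2 (log_nonpos hx0 hx1)) (rpow_nonneg hx0 _)
  · exact neg_log_mul_rpow_le hx hε

lemma sq_log_mul_self_le_of_le_one {x : ℝ} (hx0 : 0 ≤ x) (hx1 : x ≤ 1) :
    log x ^ 2 * x ≤ (2 * exp (-1)) ^ 2 := by
  simpa [div_eq_mul_inv, mul_comm] using sq_log_mul_self_le hx0 hx1 (ε := 1 / 2) (by norm_num)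

lemma rpow_three_fourths_le_inv_mul_sqrt {y a : ℝ} (hy : 0 ≤ y) (ha : 0 < a)
    (h : a ^ 2 * y ≤ 1) : y ^ (3 / 4 : ℝ) ≤ (a * √a)⁻¹ := by
  have hya : y ≤ (a ^ 2)⁻¹ := by rw [← one_div, le_div_iff₀ (by positivity)]; linarith
  calc y ^ (3 / 4 : ℝ) ≤ ((a ^ 2)⁻¹) ^ (3 / 4 : ℝ) := rpow_le_rpow hy hya (by norm_num)
    _ = (a * √a)⁻¹ := by
      rw [inv_rpow (by positivity), ← rpow_natCast, ← rpow_mul ha.le, sqrt_eq_rpow,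
        ← rpow_one_add' ha.le (by norm_num)]
      norm_num

lemma inv_mul_sqrt_le_two_mul_sub {a : ℝ} (ha : 1 < a) :
    (a * √a)⁻¹ ≤ 2 * ((√(a - 1))⁻¹ - (√a)⁻¹) := by
  set u := √(a - 1)
  set v := √a
  have hu0 : 0 < u := sqrt_pos.2 (by linarith)
  have huv : u ≤ v := sqrt_le_sqrt (by linarith)
  have hdiff : v ^ 2 - u ^ 2 = 1 := by rw [sq_sqrt (by linarith), sq_sqrt (by linarith)]; ring
  rw [← sq_sqrt (by linarith : 0 ≤ a), inv_eq_one_div, inv_eq_one_div, inv_eq_one_div,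
    div_sub_div _ _ hu0.ne' (by linarith), mul_div_assoc',
    div_le_div_iff₀ (by positivity) (by positivity)]
  nlinarith [mul_nonneg (sq_nonneg v) (sq_nonneg (v - u)),
    mul_nonneg (hu0.le.trans huv) (sub_nonneg.2 huv)]

lemma sq_log_mul_self_le_of_sq_mul_le_one {y a : ℝ} (hy0 : 0 ≤ y) (hy1 : y ≤ 1) (ha : 1 < a)
    (h : a ^ 2 * y ≤ 1) :
    log y ^ 2 * y ≤ 2 * (8 * exp (-1)) ^ 2 * ((√(a - 1))⁻¹ - (√a)⁻¹) := by
  have hε : log y ^ 2 * y ≤ (8 * exp (-1)) ^ 2 * y ^ (3 / 4 : ℝ) := by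
    convert sq_log_mul_self_le hy0 hy1 (ε := 1 / 8) (by norm_num) using 3 <;>
      norm_num [div_eq_mul_inv, mul_comm]
  calc log y ^ 2 * y ≤ (8 * exp (-1)) ^ 2 * y ^ (3 / 4 : ℝ) := hε
    _ ≤ (8 * exp (-1)) ^ 2 * (2 * ((√(a - 1))⁻¹ - (√a)⁻¹)) := by
        gcongr
        exact (rpow_three_fourths_le_inv_mul_sqrt hy0 (by linarith) h).trans
          (inv_mul_sqrt_le_two_mul_sub ha)
    _ = 2 * (8 * exp (-1)) ^ 2 * ((√(a - 1))⁻¹ - (√a)⁻¹) := by ring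

lemma tsum_ofReal_sq_log_mul_le {y : ℕ → ℝ} (hy0 : ∀ i, 0 ≤ y i) (hy1 : ∀ i, y i ≤ 1)
    (hy : ∀ i : ℕ, (i : ℝ) ^ 2 * y i ≤ 1) :
    ∑' i, ENNReal.ofReal (log (y i) ^ 2 * y i) ≤ ENNReal.ofReal (136 * exp (-1) ^ 2) := by
  set F := fun i => ENNReal.ofReal (log (y i) ^ 2 * y i)
  have hhead : ∑ i ∈ range 2, F i ≤ ENNReal.ofReal (8 * exp (-1) ^ 2) := by
    calc ∑ i ∈ range 2, F i ≤ ∑ _i ∈ range 2, ENNReal.ofReal ((2 * exp (-1)) ^ 2) :=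
          sum_le_sum fun i _ =>
            ENNReal.ofReal_le_ofReal (sq_log_mul_self_le_of_le_one (hy0 i) (hy1 i))
      _ = ENNReal.ofReal (8 * exp (-1) ^ 2) := by
          rw [sum_const, card_range, nsmul_eq_mul, ← ENNReal.ofReal_natCast,
            ← ENNReal.ofReal_mul (by norm_num)]
          ring_nf
  have htail : ∑' i, F (i + 2) ≤ ENNReal.ofReal (128 * exp (-1) ^ 2) := by
    set g : ℕ → ℝ := fun i => (√((i : ℝ) + 1))⁻¹
    have hterm (i : ℕ) :
        log (y (i + 2)) ^ 2 * y (i + 2) ≤ 2 * (8 * exp (-1)) ^ 2 * (g i - g (i + 1)) := by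
      have h := sq_log_mul_self_le_of_sq_mul_le_one (hy0 _) (hy1 _) (a := (i : ℝ) + 2)
        (by linarith [i.cast_nonneg (α := ℝ)]) (by exact_mod_cast hy (i + 2))
      have hg : g (i + 1) = (√((i : ℝ) + 2))⁻¹ := by simp only [g]; push_cast; ring_nf
      rwa [show (i : ℝ) + 2 - 1 = i + 1 by ring, ← hg] at h
    refine ENNReal.tsum_le_of_sum_range_le fun n => ?_
    rw [← ENNReal.ofReal_sum_of_nonneg fun i _ => mul_nonneg (sq_nonneg _) (hy0 _)]
    refine ENNReal.ofReal_le_ofReal ?_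
    calc ∑ i ∈ range n, log (y (i + 2)) ^ 2 * y (i + 2)
        ≤ ∑ i ∈ range n, 2 * (8 * exp (-1)) ^ 2 * (g i - g (i + 1)) :=
          sum_le_sum fun i _ => hterm i
      _ = 128 * exp (-1) ^ 2 * (1 - g n) := by
          rw [← mul_sum, sum_range_sub']
          simp only [g, Nat.cast_zero, zero_add, sqrt_one, inv_one]
          ring
      _ ≤ 128 * exp (-1) ^ 2 := by
          have : 0 ≤ g n := by positivity
          nlinarith [exp_pos (-1)]
  calc ∑' i, F i = ∑ i ∈ range 2, F i + ∑' i, F (i + 2) :=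
        (ENNReal.summable.sum_add_tsum_nat_add').symm
    _ ≤ ENNReal.ofReal (8 * exp (-1) ^ 2) + ENNReal.ofReal (128 * exp (-1) ^ 2) :=
        add_le_add hhead htail
    _ = ENNReal.ofReal (136 * exp (-1) ^ 2) := by
        rw [← ENNReal.ofReal_add (by positivity) (by positivity)]
        ring_nf

lemma ENNReal.tsum_int_eq_tsum_nat_add_tsum_nat (F : ℤ → ENNReal) (n : ℤ) :
    ∑' k, F k = ∑' i : ℕ, F (n + 1 + i) + ∑' i : ℕ, F (n - i) := by
  rw [← (Equiv.addLeft (n + 1)).tsum_eq,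
    tsum_of_nat_of_neg_add_one ENNReal.summable ENNReal.summable]
  congr 2
  ext i
  simp only [Equiv.coe_addLeft]
  ring_nf

lemma tsum_ofReal_sq_log_mul_le_of_sq_sub_mul_le_one {p : ℤ → ℝ} (hp0 : ∀ k, 0 ≤ p k)
    (hp1 : ∀ k, p k ≤ 1) {m : ℝ} (hm : ∀ k : ℤ, ((k : ℝ) - m) ^ 2 * p k ≤ 1) :
    ∑' k, ENNReal.ofReal (log (p k) ^ 2 * p k) ≤ ENNReal.ofReal (272 * exp (-1) ^ 2) := by
  have hdist (k : ℤ) (i : ℕ) (hi : (i : ℝ) ≤ |(k : ℝ) - m|) : (i : ℝ) ^ 2 * p k ≤ 1 :=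
    (mul_le_mul_of_nonneg_right (sq_le_sq.2 (by rwa [Nat.abs_cast])) (hp0 k)).trans (hm k)
  have hfloor := Int.floor_le m
  have hfloor' := Int.lt_floor_add_one m
  -- split at `⌊m⌋`: the `i`-th point on either side is at distance at least `i` from `m`
  rw [ENNReal.tsum_int_eq_tsum_nat_add_tsum_nat _ ⌊m⌋]
  calc _ ≤ ENNReal.ofReal (136 * exp (-1) ^ 2) + ENNReal.ofReal (136 * exp (-1) ^ 2) :=
        add_le_add
          (tsum_ofReal_sq_log_mul_le (fun _ => hp0 _) (fun _ => hp1 _) fun i =>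
            hdist _ i (le_abs.2 (Or.inl (by push_cast; linarith))))
          (tsum_ofReal_sq_log_mul_le (fun _ => hp0 _) (fun _ => hp1 _) fun i =>
            hdist _ i (le_abs.2 (Or.inr (by push_cast; linarith))))
    _ = ENNReal.ofReal (272 * exp (-1) ^ 2) := by
        rw [← ENNReal.ofReal_add (by positivity) (by positivity)]
        ring_nf

section Distribution

variable {Ω α : Type*} [MeasurableSpace Ω] [MeasurableSpace α] [Countable α]
  [MeasurableSingletonClass α] {μ : Measure Ω} {X : Ω → α}

lemma hasSum_toReal_measure_preimage_singleton [IsProbabilityMeasure μ] (hX : Measurable X) :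
    HasSum (fun a => (μ (X ⁻¹' {a})).toReal) 1 := by
  have : IsProbabilityMeasure (μ.map X) := Measure.isProbabilityMeasure_map hX.aemeasurable
  have h := (μ.map X).toPMF.tsum_coe
  simp only [Measure.toPMF_apply, Measure.map_apply hX (measurableSet_singleton _)] at h
  have hreal := ENNReal.hasSum_toReal (h.symm ▸ ENNReal.one_ne_top)
  rwa [← ENNReal.tsum_toReal_eq fun _ => measure_ne_top _ _, h, ENNReal.toReal_one] at hreal

lemma integral_comp_eq_toReal_tsum (hX : Measurable X) {p : α → ℝ}
    (hp : ∀ a, μ (X ⁻¹' {a}) = ENNReal.ofReal (p a)) {f : α → ℝ} (hf : ∀ a, 0 ≤ f a) :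
    ∫ ω, f (X ω) ∂μ = (∑' a, ENNReal.ofReal (f a * p a)).toReal := by
  rw [integral_eq_lintegral_of_nonneg_ae (.of_forall fun ω => hf (X ω))
      ((measurable_of_countable f).comp hX).aestronglyMeasurable,
    ← lintegral_map (f := fun a => ENNReal.ofReal (f a)) (measurable_of_countable _) hX,
    lintegral_countable']
  congr 1
  refine tsum_congr fun a => ?_
  rw [Measure.map_apply hX (measurableSet_singleton a), hp, ENNReal.ofReal_mul (hf a)]

lemma integral_comp_eq_tsum (hX : Measurable X) {p : α → ℝ} (hp0 : ∀ a, 0 ≤ p a)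
    (hp : ∀ a, μ (X ⁻¹' {a}) = ENNReal.ofReal (p a)) {f : α → ℝ} (hf : ∀ a, 0 ≤ f a)
    (hsum : Summable fun a => f a * p a) :
    ∫ ω, f (X ω) ∂μ = ∑' a, f a * p a := by
  rw [integral_comp_eq_toReal_tsum hX hp hf,
    ← ENNReal.ofReal_tsum_of_nonneg (fun a => mul_nonneg (hf a) (hp0 a)) hsum,
    ENNReal.toReal_ofReal (tsum_nonneg fun a => mul_nonneg (hf a) (hp0 a))]

end Distribution

theorem second_moment_information_content_isotropic_general
    {Ω : Type*} [MeasureSpace Ω] [IsProbabilityMeasure (ℙ : Measure Ω)]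
    (X : Ω → ℤ) (hX : Measurable X)
    (p : ℤ → ℝ) (hp : ∀ k : ℤ, p k = (ℙ (X ⁻¹' {k})).toReal)
    (hlc : IsLogConcavePMF p)
    (m : ℝ)
    (hvar : (∫ ω, ((X ω : ℝ) - m) ^ 2) ≤ 1) :
    (∫ ω, (Real.log (p (X ω))) ^ 2) ≤ 39 := by
  have hp0 (k : ℤ) : 0 ≤ p k := hp k ▸ ENNReal.toReal_nonneg
  have hsum : HasSum p 1 := by
    simpa only [← hp] using hasSum_toReal_measure_preimage_singleton (μ := ℙ) hX
  have hP (k : ℤ) : ℙ (X ⁻¹' {k}) = ENNReal.ofReal (p k) := by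
    rw [hp, ENNReal.ofReal_toReal (measure_ne_top _ _)]
  have hvar_sum := hlc.summable_sq_sub_mul hp0 hsum m
  have hcheb (k : ℤ) : ((k : ℝ) - m) ^ 2 * p k ≤ 1 := by
    refine (le_hasSum hvar_sum.hasSum k fun j _ => mul_nonneg (sq_nonneg _) (hp0 j)).trans ?_
    rwa [← integral_comp_eq_tsum hX hp0 hP (f := fun k : ℤ => ((k : ℝ) - m) ^ 2)
      (fun k => sq_nonneg _) hvar_sum]
  rw [integral_comp_eq_toReal_tsum hX hP (f := fun k => log (p k) ^ 2) fun k => sq_nonneg _]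
  calc _ ≤ 272 * exp (-1) ^ 2 := ENNReal.toReal_le_of_le_ofReal (by positivity)
        (tsum_ofReal_sq_log_mul_le_of_sq_sub_mul_le_one hp0
          (fun k => le_hasSum hsum k fun j _ => hp0 j) hcheb)
    _ ≤ 39 := by nlinarith [exp_neg_one_lt_d9, exp_pos (-1)]

/-- If `X` is a log-concave integer-valued random variable with p.m.f. `p` and
`Var(X) ≤ 1`, then `E[log²(p(X))] ≤ 39`. -/
theorem second_moment_information_content_isotropic
    {Ω : Type*} [MeasureSpace Ω] [IsProbabilityMeasure (ℙ : Measure Ω)]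
    (X : Ω → ℤ) (hX : Measurable X)
    (p : ℤ → ℝ) (hp : ∀ k : ℤ, p k = (ℙ (X ⁻¹' {k})).toReal)
    (hlc : IsLogConcavePMF p)
    (m : ℝ) (hm : m = ∫ ω, (X ω : ℝ))
    (hvar : (∫ ω, ((X ω : ℝ) - m) ^ 2) ≤ 1) :
    (∫ ω, (Real.log (p (X ω))) ^ 2) ≤ 39 :=
  second_moment_information_content_isotropic_general X hX p hp hlc m hvar
end

section
/- Let λ ∈ (0, ∞) and let q(k) = C·λ^{|k|}/|k|!, k ∈ ℤ, with C = (2e^λ − 1)^{−1}, be the probability mass function of the symmetric Poisson distribution, and assume its variance equals 1, i.e., Σ_{k∈ℤ} k²·q(k) = 1. Then λ ∈ [1/4, 1], and q belongs to the class Q(1 + log 4, 2e − 1); that is, for every k ∈ ℤ, log(1/q(k)) ≤ (1 + log 4)·k² + log(2e − 1). -/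
open MeasureTheory ProbabilityTheory
open scoped ProbabilityTheory

/-- The class `Q(a,c)` of functions `q : ℤ → [0,1]` such that
`log(1/q(k)) ≤ a·k² + log(c)` for all `k` in the support of `q`. -/
def MemQClass (a c : ℝ) (q : ℤ → ℝ) : Prop :=
  (∀ k : ℤ, 0 ≤ q k ∧ q k ≤ 1) ∧
  (∀ k : ℤ, 0 < q k → Real.log (1 / q k) ≤ a * (k : ℝ) ^ 2 + Real.log c)

/-!
Since `∑ n² λⁿ / n! = λ(λ+1)e^λ` and the sum over `ℤ` counts every `n ≥ 1` twice, the variance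
is `2λ(λ+1)e^λ / (2e^λ - 1)`, so variance one means `2λ(λ+1)e^λ = 2e^λ - 1`; this forces
`λ ≤ 1` (otherwise the left side exceeds `4e^λ`) and `λ ≥ 1/4` (otherwise `(2 - 2λ - 2λ²)e^λ > 1`).
For `λ ∈ [1/4, 1]` and `n = |k|` we have `1/q(k) = (2e^λ - 1) · n! · λ⁻ⁿ`, and the three factors
are bounded by `2e - 1`, `n! ≤ nⁿ ≤ e^{n²}` and `λ⁻ⁿ ≤ 4ⁿ ≤ 4^{n²}`.
-/

open Real
open scoped Nat

lemma HasSum.comp_natAbs {G : Type*} [AddCommGroup G] [TopologicalSpace G]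
    [IsTopologicalAddGroup G] {g : ℕ → G} {a : G} (h : HasSum g a) (h0 : g 0 = 0) :
    HasSum (fun k : ℤ => g k.natAbs) (a + a) := by
  simpa [h0] using HasSum.of_nat_of_neg (f := fun k : ℤ => g k.natAbs) (by simpa using h)
    (by simpa using h)

lemma hasSum_of_hasSum_succ {G : Type*} [AddCommGroup G] [TopologicalSpace G]
    [IsTopologicalAddGroup G] {f : ℕ → G} {a : G} (h0 : f 0 = 0)
    (h : HasSum (fun n => f (n + 1)) a) : HasSum f a := by
  simpa [h0] using (hasSum_nat_add_iff 1).mp h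

namespace Real

lemma hasSum_pow_div_factorial (x : ℝ) : HasSum (fun n : ℕ => x ^ n / n !) (exp x) :=
  exp_eq_exp_ℝ ▸ NormedSpace.expSeries_div_hasSum_exp x

lemma hasSum_mul_pow_div_factorial (x : ℝ) :
    HasSum (fun n : ℕ => n * x ^ n / n !) (x * exp x) := by
  refine hasSum_of_hasSum_succ (by simp)
    (((hasSum_pow_div_factorial x).mul_left x).congr_fun fun n => ?_)
  rw [Nat.factorial_succ]
  push_cast
  field_simp
  ring

lemma hasSum_sq_mul_pow_div_factorial (x : ℝ) :
    HasSum (fun n : ℕ => (n : ℝ) ^ 2 * x ^ n / n !) (x * (x + 1) * exp x) := by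
  have h := ((hasSum_mul_pow_div_factorial x).add (hasSum_pow_div_factorial x)).mul_left x
  rw [show x * (x + 1) * exp x = x * (x * exp x + exp x) by ring]
  refine hasSum_of_hasSum_succ (by simp) (h.congr_fun fun n => ?_)
  rw [Nat.factorial_succ]
  push_cast
  field_simp
  ring

end Real

lemma Nat.factorial_le_exp_sq (n : ℕ) : (n ! : ℝ) ≤ exp ((n : ℝ) ^ 2) :=
  calc (n ! : ℝ) ≤ (n : ℝ) ^ n := mod_cast Nat.factorial_le_pow n
    _ ≤ exp (n : ℝ) ^ n := pow_le_pow_left₀ n.cast_nonneg (by linarith [add_one_le_exp n]) n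
    _ = exp ((n : ℝ) ^ 2) := by rw [← exp_nat_mul, sq]

lemma inv_pow_le_exp_log_four_mul_sq {lam : ℝ} (hlam : 1 / 4 ≤ lam) (n : ℕ) :
    lam⁻¹ ^ n ≤ exp (log 4 * (n : ℝ) ^ 2) := by
  have hinv : lam⁻¹ ≤ 4 := by
    rw [inv_le_comm₀ (by linarith) (by norm_num)]
    linarith
  have hn : (n : ℝ) ≤ (n : ℝ) ^ 2 := mod_cast Nat.le_self_pow two_ne_zero n
  calc lam⁻¹ ^ n ≤ 4 ^ n := pow_le_pow_left₀ (by positivity) hinv n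
    _ = exp (n * log 4) := by rw [exp_nat_mul, exp_log (by norm_num)]
    _ ≤ exp (log 4 * (n : ℝ) ^ 2) := by
      gcongr exp ?_
      nlinarith [log_nonneg (by norm_num : (1 : ℝ) ≤ 4)]

lemma two_mul_exp_sub_one_pos {x : ℝ} (hx : 0 ≤ x) : 0 < 2 * exp x - 1 := by
  linarith [one_le_exp hx]

noncomputable def symmetricPoisson (lam : ℝ) (k : ℤ) : ℝ :=
  (2 * exp lam - 1)⁻¹ * lam ^ k.natAbs / (k.natAbs ! : ℝ)

section symmetricPoisson

variable {lam : ℝ}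

lemma symmetricPoisson_pos (hlam : 0 < lam) (k : ℤ) : 0 < symmetricPoisson lam k := by
  have := two_mul_exp_sub_one_pos hlam.le
  unfold symmetricPoisson
  positivity

lemma symmetricPoisson_le_one (h0 : 0 ≤ lam) (h1 : lam ≤ 1) (k : ℤ) :
    symmetricPoisson lam k ≤ 1 := by
  have hC : (2 * exp lam - 1)⁻¹ ≤ 1 := inv_le_one_of_one_le₀ (by linarith [one_le_exp h0])
  have hfac : (1 : ℝ) ≤ k.natAbs ! := mod_cast k.natAbs.factorial_pos
  unfold symmetricPoisson
  rw [div_le_one (by positivity)]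
  exact (mul_le_one₀ hC (by positivity) (pow_le_one₀ h0 h1)).trans hfac

lemma hasSum_sq_mul_symmetricPoisson (lam : ℝ) :
    HasSum (fun k : ℤ => (k : ℝ) ^ 2 * symmetricPoisson lam k)
      (2 * lam * (lam + 1) * exp lam / (2 * exp lam - 1)) := by
  have h := ((hasSum_sq_mul_pow_div_factorial lam).comp_natAbs (by simp)).mul_left
    (2 * exp lam - 1)⁻¹
  rw [show 2 * lam * (lam + 1) * exp lam / (2 * exp lam - 1) = (2 * exp lam - 1)⁻¹ *
      (lam * (lam + 1) * exp lam + lam * (lam + 1) * exp lam) by ring]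
  refine h.congr_fun fun k => ?_
  rw [symmetricPoisson, Nat.cast_natAbs, Int.cast_abs, sq_abs]
  ring

lemma mem_Icc_of_variance_symmetricPoisson_eq_one (hlam : 0 < lam)
    (hvar : ∑' k : ℤ, (k : ℝ) ^ 2 * symmetricPoisson lam k = 1) :
    lam ∈ Set.Icc (1 / 4 : ℝ) 1 := by
  have hC := two_mul_exp_sub_one_pos hlam.le
  rw [(hasSum_sq_mul_symmetricPoisson lam).tsum_eq, div_eq_one_iff_eq hC.ne'] at hvar
  have hexp := one_le_exp hlam.le
  constructor
  · by_contra! hlt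
    have hcoef : (0 : ℝ) ≤ 2 - 2 * lam - 2 * lam ^ 2 := by nlinarith
    nlinarith [mul_le_mul_of_nonneg_right hexp hcoef]
  · by_contra! hgt
    nlinarith [mul_lt_mul_of_pos_right (by nlinarith : 2 < lam * (lam + 1)) (exp_pos lam)]

lemma one_div_symmetricPoisson_le (hlam : lam ∈ Set.Icc (1 / 4 : ℝ) 1) (k : ℤ) :
    1 / symmetricPoisson lam k ≤ (2 * exp 1 - 1) * exp ((1 + log 4) * (k : ℝ) ^ 2) := by
  obtain ⟨hlo, hhi⟩ := hlam
  have hsq : (k : ℝ) ^ 2 = (k.natAbs : ℝ) ^ 2 := by rw [Nat.cast_natAbs, Int.cast_abs, sq_abs]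
  have hC := two_mul_exp_sub_one_pos (x := lam) (by linarith)
  have hC1 : 2 * exp lam - 1 ≤ 2 * exp 1 - 1 := by linarith [exp_le_exp.mpr hhi]
  calc 1 / symmetricPoisson lam k = (2 * exp lam - 1) * (k.natAbs ! * lam⁻¹ ^ k.natAbs) := by
        unfold symmetricPoisson
        rw [inv_pow]
        field_simp
    _ ≤ (2 * exp 1 - 1) * (exp ((k.natAbs : ℝ) ^ 2) * exp (log 4 * (k.natAbs : ℝ) ^ 2)) := by
        gcongr
        · exact (two_mul_exp_sub_one_pos zero_le_one).le
        · exact Nat.factorial_le_exp_sq _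
        · exact inv_pow_le_exp_log_four_mul_sq hlo _
    _ = (2 * exp 1 - 1) * exp ((1 + log 4) * (k : ℝ) ^ 2) := by
        rw [← exp_add, hsq]
        ring_nf

lemma log_one_div_symmetricPoisson_le (hlam : lam ∈ Set.Icc (1 / 4 : ℝ) 1) (k : ℤ) :
    log (1 / symmetricPoisson lam k) ≤ (1 + log 4) * (k : ℝ) ^ 2 + log (2 * exp 1 - 1) := by
  have hpos := symmetricPoisson_pos (by linarith [hlam.1]) k
  have he := two_mul_exp_sub_one_pos zero_le_one
  calc log (1 / symmetricPoisson lam k)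
      ≤ log ((2 * exp 1 - 1) * exp ((1 + log 4) * (k : ℝ) ^ 2)) :=
        log_le_log (by positivity) (one_div_symmetricPoisson_le hlam k)
    _ = (1 + log 4) * (k : ℝ) ^ 2 + log (2 * exp 1 - 1) := by
        rw [log_mul he.ne' (exp_pos _).ne', log_exp, add_comm]

end symmetricPoisson

/-- If `q(k) = C·λ^{|k|}/|k|!` with `C = (2e^λ − 1)⁻¹` is the symmetric Poisson
p.m.f. with variance 1, then `λ ∈ [1/4, 1]` and `q ∈ Q(1 + log 4, 2e − 1)`, i.e.
`log(1/q(k)) ≤ (1 + log 4)·k² + log(2e − 1)` for every `k ∈ ℤ`. -/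
theorem symmetric_poisson_memQClass
    (lam : ℝ) (hlam : 0 < lam)
    (q : ℤ → ℝ)
    (hq : ∀ k : ℤ, q k = (2 * Real.exp lam - 1)⁻¹ * lam ^ k.natAbs /
      (Nat.factorial k.natAbs : ℝ))
    (hvar : (∑' k : ℤ, (k : ℝ) ^ 2 * q k) = 1) :
    lam ∈ Set.Icc (1 / 4 : ℝ) 1 ∧
    MemQClass (1 + Real.log 4) (2 * Real.exp 1 - 1) q ∧
    (∀ k : ℤ, Real.log (1 / q k) ≤
      (1 + Real.log 4) * (k : ℝ) ^ 2 + Real.log (2 * Real.exp 1 - 1)) := by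
  obtain rfl : q = symmetricPoisson lam := funext hq
  have hIcc := mem_Icc_of_variance_symmetricPoisson_eq_one hlam hvar
  have hlog := log_one_div_symmetricPoisson_le hIcc
  have hbounds k : 0 ≤ symmetricPoisson lam k ∧ symmetricPoisson lam k ≤ 1 :=
    ⟨(symmetricPoisson_pos hlam k).le, symmetricPoisson_le_one hlam.le hIcc.2 k⟩
  exact ⟨hIcc, ⟨hbounds, fun k _ => hlog k⟩, hlog⟩
end
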